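/- arXiv:1902.01322 — 4 statements merged into one kernel-verified Lean document; each statement's English description precedes it below -/
import Mathlib

section
/- Cyclewidth is monotone under subgraphs: if D' is a subgraph of a digraph D, then cw(D') ≤ cw(D). -/
open scoped Classical

/-- A finite digraph (without loops or multiple arcs) on a subset of `ℕ`. -/
structure Dgraph where
  verts : Finset ℕ
  arcs : Finset (ℕ × ℕ)
  arcs_mem : ∀ a ∈ arcs, a.1 ∈ verts ∧ a.2 ∈ verts
  no_loops : ∀ a ∈ arcs, a.1 ≠ a.2

/-- The cut of a digraph at a set `X`: all arcs with exactly one endpoint in `X`. -/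
noncomputable def Dgraph.cutArcs (D : Dgraph) (X : Set ℕ) : Finset (ℕ × ℕ) :=
  D.arcs.filter fun a => (a.1 ∈ X ∧ a.2 ∉ X) ∨ (a.1 ∉ X ∧ a.2 ∈ X)

/-- `F` is the union of the arc sets of a family of pairwise vertex-disjoint directed
cycles of `D`: every vertex has at most one outgoing arc in `F` and equally many
outgoing and incoming arcs in `F`. -/
def Dgraph.IsCycleFamily (D : Dgraph) (F : Finset (ℕ × ℕ)) : Prop :=
  F ⊆ D.arcs ∧ ∀ v : ℕ,
    (F.filter fun a => a.1 = v).card ≤ 1 ∧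
    (F.filter fun a => a.1 = v).card = (F.filter fun a => a.2 = v).card

/-- The cycle porosity of the cut at `X`: the maximum number of edges of the cut lying
on a family of pairwise vertex-disjoint directed cycles. -/
noncomputable def Dgraph.cycPorosity (D : Dgraph) (X : Set ℕ) : ℕ :=
  (D.arcs.powerset.filter fun F => D.IsCycleFamily F).sup fun F => (D.cutArcs X ∩ F).card

/-- A leaf of a tree (a vertex with at most one neighbour). -/
def IsTreeLeaf {W : Type} (T : SimpleGraph W) (t : W) : Prop :=
  (T.neighborSet t).ncard ≤ 1

/-- A cubic tree: a tree all of whose inner (non-leaf) vertices have degree exactly 3. -/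
def IsCubicTree {W : Type} (T : SimpleGraph W) : Prop :=
  T.IsTree ∧ ∀ t : W, ¬ IsTreeLeaf T t → (T.neighborSet t).ncard = 3

/-- The shore induced by the tree edge `t₁t₂`: the images of all leaves lying on the
`t₁`-side of the tree after deleting the edge `t₁t₂`. -/
def treeShore {W : Type} (T : SimpleGraph W) (φ : W → ℕ) (t₁ t₂ : W) : Set ℕ :=
  φ '' {l | IsTreeLeaf T l ∧ (T.deleteEdges {s(t₁, t₂)}).Reachable t₁ l}

/-- A cycle decomposition of a digraph `D`: a cubic tree together with a bijection `φ`
between its leaves and the vertices of `D`. -/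
structure CycleDecomp (D : Dgraph) where
  W : Type
  fin : Fintype W
  T : SimpleGraph W
  cubic : IsCubicTree T
  φ : W → ℕ
  bij : Set.BijOn φ {l | IsTreeLeaf T l} ↑D.verts

/-- The width of a cycle decomposition: the maximum cycle porosity over the cuts induced
by the edges of the tree. -/
noncomputable def CycleDecomp.width {D : Dgraph} (c : CycleDecomp D) : ℕ :=
  letI := c.fin
  Finset.univ.sup fun p : c.W × c.W =>
    if c.T.Adj p.1 p.2 then D.cycPorosity (treeShore c.T c.φ p.1 p.2) else 0

/-- The cyclewidth of a digraph: the least width of a cycle decomposition. -/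
noncomputable def cycleWidth (D : Dgraph) : ℕ :=
  sInf {k | ∃ c : CycleDecomp D, c.width = k}

/-- `H` is a subgraph of `D`. -/
def Dgraph.IsSubgraph (H D : Dgraph) : Prop :=
  H.verts ⊆ D.verts ∧ H.arcs ⊆ D.arcs

/-- The digraph obtained by reversing the orientation of every arc. -/
noncomputable def Dgraph.reverse (D : Dgraph) : Dgraph where
  verts := D.verts
  arcs := D.arcs.image Prod.swap
  arcs_mem := by
    intro a ha
    simp only [Finset.mem_image] at ha
    obtain ⟨b, hb, rfl⟩ := ha
    exact ⟨(D.arcs_mem b hb).2, (D.arcs_mem b hb).1⟩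
  no_loops := by
    intro a ha
    simp only [Finset.mem_image] at ha
    obtain ⟨b, hb, rfl⟩ := ha
    exact fun h => D.no_loops b hb h.symm

/-!
Given a cycle decomposition `(T, φ)` of `D` of optimal width, delete one by one the leaves
of `T` labelled by vertices outside `D'`, each time suppressing the neighbour of the deleted
leaf, which has become a vertex of degree two. Every edge of the new cubic tree splits the
surviving leaves as some edge of the old tree does, and the cycle porosity of a cut depends
only on its trace on the vertex set and can only drop when passing to a subgraph. Once `D'`
has a single vertex, the one-vertex tree has width `0`. That `D` has a cycle decomposition at
all comes from growing cubic trees with any number of leaves by attaching two new leaves to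
an old one.
-/

theorem Set.eq_of_ncard_eq_three {α : Type*} {s : Set α} (hs : s.ncard = 3) {a b c : α}
    (ha : a ∈ s) (hb : b ∈ s) (hc : c ∈ s) (hab : a ≠ b) (hac : a ≠ c) (hbc : b ≠ c) :
    s = {a, b, c} :=
  (Set.eq_of_subset_of_ncard_le (by simp [Set.insert_subset_iff, ha, hb, hc])
    (by rw [hs, Set.ncard_eq_three.2 ⟨a, b, c, hab, hac, hbc, rfl⟩])
    (Set.finite_of_ncard_pos (by omega))).symm

namespace SimpleGraph

variable {V V' : Type*} {G : SimpleGraph V} {u v : V}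

theorem Reachable.map_of_forall_adj {H : SimpleGraph V'} (f : V → V')
    (hf : ∀ x y, G.Adj x y → H.Reachable (f x) (f y)) (h : G.Reachable u v) :
    H.Reachable (f u) (f v) := by
  obtain ⟨p⟩ := h
  induction p with
  | nil => rfl
  | cons ha _ ih => exact (hf _ _ ha).trans ih

theorem Reachable.mem_of_forall_adj_mem {s : Set V} (hs : ∀ x ∈ s, ∀ y, G.Adj x y → y ∈ s)
    (hu : u ∈ s) (h : G.Reachable u v) : v ∈ s := by
  obtain ⟨p⟩ := h
  induction p with
  | nil => exact hu
  | cons ha _ ih => exact ih (hs _ hu _ ha)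

theorem IsAcyclic.not_adj_of_adj_of_adj (hG : G.IsAcyclic) {x t y : V} (hxt : G.Adj x t)
    (hty : G.Adj t y) : ¬ G.Adj x y := fun hxy =>
  hG.cliqueFree le_rfl {x, t, y} (is3Clique_triple_iff.2 ⟨hxt, hxy, hty⟩)

end SimpleGraph

section Leaves

variable {W : Type} [Finite W] {T : SimpleGraph W} {l : W}

theorem IsTreeLeaf.eq_of_adj (hl : IsTreeLeaf T l) {x y : W} (hx : T.Adj l x) (hy : T.Adj l y) :
    x = y :=
  (Set.ncard_le_one_iff (Set.toFinite _)).1 hl hx hy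

theorem SimpleGraph.IsTree.exists_isTreeLeaf (hT : T.IsTree) : ∃ l, IsTreeLeaf T l := by
  have := Fintype.ofFinite W
  obtain ⟨v⟩ := hT.connected.nonempty
  cases subsingleton_or_nontrivial W with
  | inl _ =>
    exact ⟨v, (Set.ncard_le_one_iff (Set.toFinite _)).2 fun _ _ => Subsingleton.elim _ _⟩
  | inr _ =>
    obtain ⟨l, hl⟩ := hT.exists_vert_degree_one_of_nontrivial
    refine ⟨l, ?_⟩
    rw [IsTreeLeaf, ← Nat.card_coe_set_eq, Nat.card_eq_fintype_card,
      SimpleGraph.card_neighborSet_eq_degree, hl]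

theorem exists_adj_not_isTreeLeaf (hT : T.Connected) (hl : IsTreeLeaf T l) {x y : W}
    (hxl : x ≠ l) (hyl : y ≠ l) (hxy : x ≠ y) :
    ∃ t, T.Adj l t ∧ ¬ IsTreeLeaf T t := by
  by_contra! hleaf
  have hclosed : ∀ z ∈ insert l (T.neighborSet l), ∀ w, T.Adj z w →
      w ∈ insert l (T.neighborSet l) := by
    rintro z (rfl | hz) w hzw
    · exact Or.inr hzw
    · exact Or.inl ((hleaf z hz).eq_of_adj hz.symm hzw).symm
  have hmem : ∀ z, z ≠ l → T.Adj l z := fun z hz =>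
    ((hT.preconnected l z).mem_of_forall_adj_mem hclosed (Set.mem_insert l _)).resolve_left hz
  exact hxy (hl.eq_of_adj (hmem x hxl) (hmem y hyl))

theorem isTreeLeaf_top (hW : Nat.card W ≤ 2) (v : W) : IsTreeLeaf (⊤ : SimpleGraph W) v := by
  refine (Set.ncard_le_one_iff (Set.toFinite _)).2 fun {a b} (ha : v ≠ a) (hb : v ≠ b) => ?_
  by_contra hab
  have := Set.ncard_le_ncard (Set.subset_univ {v, a, b})
  rw [Set.ncard_eq_three.2 ⟨v, a, b, ha, hb, hab, rfl⟩, Set.ncard_univ] at this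
  omega

theorem isCubicTree_top [Nonempty W] (hW : Nat.card W ≤ 2) : IsCubicTree (⊤ : SimpleGraph W) :=
  ⟨⟨SimpleGraph.connected_top, .of_card_le_two (by
    rw [ENat.card_eq_coe_natCard]; exact_mod_cast hW)⟩,
    fun v hv => (hv (isTreeLeaf_top hW v)).elim⟩

end Leaves

namespace SimpleGraph

variable {V : Type*} {G : SimpleGraph V}

/-- Delete the leaf `l` and suppress its neighbour `t`: the remaining neighbours of `t`
become adjacent. -/
def pruneLeaf (G : SimpleGraph V) (l t : V) : SimpleGraph {x : V // x ≠ l ∧ x ≠ t} where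
  Adj x y := x ≠ y ∧ (G.Adj x y ∨ G.Adj x t ∧ G.Adj t y)
  symm := ⟨fun _ _ h => ⟨h.1.symm, h.2.imp (·.symm) fun h => ⟨h.2.symm, h.1.symm⟩⟩⟩
  loopless := ⟨fun _ h => h.1 rfl⟩

variable {l t : V}

@[simp]
theorem pruneLeaf_adj {x y : {x : V // x ≠ l ∧ x ≠ t}} :
    (G.pruneLeaf l t).Adj x y ↔ x ≠ y ∧ (G.Adj x y ∨ G.Adj x t ∧ G.Adj t y) := Iff.rfl

theorem pruneLeaf_reachable_iff (hl : ∀ y, G.Adj l y → y = t) {c : {x : V // x ≠ l ∧ x ≠ t}}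
    (hc : G.Adj t c) {x y : {x : V // x ≠ l ∧ x ≠ t}} :
    (G.pruneLeaf l t).Reachable x y ↔ G.Reachable x y := by
  refine ⟨fun h => h.map_of_forall_adj Subtype.val fun p q hpq => ?_, fun h => ?_⟩
  · rcases hpq.2 with hpq | ⟨hpt, htq⟩
    exacts [hpq.reachable, hpt.reachable.trans htq.reachable]
  · -- collapse `l` and `t` onto `c`: an edge at `l` or `t` joins two vertices that land
    -- within one step of `c`
    let ψ : V → {x : V // x ≠ l ∧ x ≠ t} := fun z => if hz : z ≠ l ∧ z ≠ t then ⟨z, hz⟩ else c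
    have hψ : ∀ z : {x : V // x ≠ l ∧ x ≠ t}, ψ z = z := fun z => dif_pos z.2
    have hnear : ∀ z, (G.Adj t z ∨ ¬(z ≠ l ∧ z ≠ t)) → (G.pruneLeaf l t).Reachable c (ψ z) := by
      intro z hz
      by_cases hzW : z ≠ l ∧ z ≠ t
      · have htz := hz.resolve_right (not_not.2 hzW)
        rw [show ψ z = ⟨z, hzW⟩ from dif_pos hzW]
        by_cases hcz : c = ⟨z, hzW⟩
        · rw [hcz]
        · exact Adj.reachable ⟨hcz, Or.inr ⟨hc.symm, htz⟩⟩
      · rw [show ψ z = c from dif_neg hzW]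
    have hend : ∀ z w, G.Adj z w → ¬(z ≠ l ∧ z ≠ t) → G.Adj t w ∨ ¬(w ≠ l ∧ w ≠ t) := by
      intro z w hzw hz
      by_cases hzl : z = l
      · exact Or.inr fun hw => hw.2 (hl w (hzl ▸ hzw))
      · exact Or.inl (by rwa [show z = t by tauto] at hzw)
    have := h.map_of_forall_adj (H := G.pruneLeaf l t) ψ fun p q hpq => by
      by_cases hW : (p ≠ l ∧ p ≠ t) ∧ (q ≠ l ∧ q ≠ t)
      · rw [show ψ p = ⟨p, hW.1⟩ from dif_pos hW.1, show ψ q = ⟨q, hW.2⟩ from dif_pos hW.2]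
        exact Adj.reachable ⟨fun h => hpq.ne (congrArg Subtype.val h), Or.inl hpq⟩
      rcases not_and_or.1 hW with hp | hq
      · exact (hnear p (Or.inr hp)).symm.trans (hnear q (hend p q hpq hp))
      · exact (hnear p (hend q p hpq.symm hq)).symm.trans (hnear q (Or.inr hq))
    rwa [hψ, hψ] at this

theorem pruneLeaf_deleteEdges_of_adj (hG : G.IsAcyclic) {x y : {x : V // x ≠ l ∧ x ≠ t}}
    (hxy : G.Adj x y) :
    (G.pruneLeaf l t).deleteEdges {s(x, y)} = (G.deleteEdges {s(↑x, ↑y)}).pruneLeaf l t := by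
  ext p q
  simp only [deleteEdges_adj, pruneLeaf_adj, Set.mem_singleton_iff, Sym2.eq_iff, Subtype.ext_iff]
  have := @hG.not_adj_of_adj_of_adj
  grind [SimpleGraph.adj_comm, Subtype.ext_iff]

theorem pruneLeaf_deleteEdges_of_not_adj (hlt : G.Adj l t)
    (ht : (G.neighborSet t).ncard = 3) {x y : {x : V // x ≠ l ∧ x ≠ t}}
    (hxy : (G.pruneLeaf l t).Adj x y) (hnxy : ¬ G.Adj x y) :
    (G.pruneLeaf l t).deleteEdges {s(x, y)} = (G.deleteEdges {s(↑x, t)}).pruneLeaf l t := by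
  have hxt : G.Adj x t := (hxy.2.resolve_left hnxy).1
  have hty : G.Adj t y := (hxy.2.resolve_left hnxy).2
  have hN := Set.eq_of_ncard_eq_three ht hlt.symm hxt.symm hty (x.2.1.symm) (y.2.1.symm)
    (fun h => hxy.1 (Subtype.ext h))
  have hN' : ∀ z, G.Adj t z → z = l ∨ z = x ∨ z = y := fun z hz => by
    have : z ∈ G.neighborSet t := hz
    rwa [hN] at this
  ext p q
  simp only [deleteEdges_adj, pruneLeaf_adj, Set.mem_singleton_iff, Sym2.eq_iff, Subtype.ext_iff]
  grind [SimpleGraph.adj_comm, Subtype.ext_iff]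

end SimpleGraph

namespace SimpleGraph

variable {V : Type} [Finite V] {G : SimpleGraph V} {l t : V}

theorem exists_adj_of_ncard_neighborSet_eq_three (ht : (G.neighborSet t).ncard = 3) :
    ∃ c : {x : V // x ≠ l ∧ x ≠ t}, G.Adj t c := by
  obtain ⟨c, hc, hcl⟩ := Set.sdiff_nonempty_of_ncard_lt_ncard (s := {l}) (t := G.neighborSet t)
    (by rw [Set.ncard_singleton, ht]; omega)
  exact ⟨⟨c, hcl, (G.ne_of_adj hc).symm⟩, hc⟩

theorem reachable_pruneLeaf_deleteEdges_iff (hG : G.IsAcyclic) (hlt : G.Adj l t)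
    (hl : IsTreeLeaf G l) (ht : (G.neighborSet t).ncard = 3) {x y : {x : V // x ≠ l ∧ x ≠ t}}
    (hxy : (G.pruneLeaf l t).Adj x y) {w₁ w₂ : {x : V // x ≠ l ∧ x ≠ t}} :
    ((G.pruneLeaf l t).deleteEdges {s(x, y)}).Reachable w₁ w₂ ↔
      (G.deleteEdges {s(↑x, if G.Adj x y then ↑y else t)}).Reachable w₁ w₂ := by
  have hl' : ∀ z, G.Adj l z → z = t := fun z hz => hl.eq_of_adj hz hlt
  split_ifs with hadj
  · obtain ⟨c, hc⟩ := exists_adj_of_ncard_neighborSet_eq_three (l := l) ht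
    rw [pruneLeaf_deleteEdges_of_adj hG hadj]
    refine pruneLeaf_reachable_iff (G := G.deleteEdges _) (fun z hz => hl' z hz.1) (c := c) ⟨hc, ?_⟩
    simp [x.2.2.symm, y.2.2.symm]
  · rw [pruneLeaf_deleteEdges_of_not_adj hlt ht hxy hadj]
    refine pruneLeaf_reachable_iff (G := G.deleteEdges _) (fun z hz => hl' z hz.1) (c := y)
      ⟨(hxy.2.resolve_left hadj).2, ?_⟩
    simp [x.2.2.symm, (Subtype.coe_ne_coe.2 hxy.1).symm]

theorem IsTree.pruneLeaf (hG : G.IsTree) (hlt : G.Adj l t) (hl : IsTreeLeaf G l)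
    (ht : (G.neighborSet t).ncard = 3) : (G.pruneLeaf l t).IsTree := by
  have hl' : ∀ z, G.Adj l z → z = t := fun z hz => hl.eq_of_adj hz hlt
  obtain ⟨c, hc⟩ := exists_adj_of_ncard_neighborSet_eq_three (l := l) ht
  have : Nonempty {x : V // x ≠ l ∧ x ≠ t} := ⟨c⟩
  refine ⟨⟨fun x y => (pruneLeaf_reachable_iff hl' hc).2 (hG.connected.preconnected x y)⟩, ?_⟩
  have hbridge := isAcyclic_iff_forall_adj_isBridge.1 hG.isAcyclic
  refine isAcyclic_iff_forall_adj_isBridge.2 fun x y hxy hreach => ?_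
  rw [reachable_pruneLeaf_deleteEdges_iff hG.isAcyclic hlt hl ht hxy] at hreach
  split_ifs at hreach with hadj
  · exact hbridge hadj hreach
  · -- `y` is still joined to `t`, so `x` and `t` would be connected off the edge `xt`
    obtain ⟨hxt, hty⟩ := hxy.2.resolve_left hadj
    refine hbridge hxt (hreach.trans (Adj.reachable ⟨hty.symm, ?_⟩))
    simp [(Subtype.coe_ne_coe.2 hxy.1).symm, y.2.2]

theorem ncard_neighborSet_pruneLeaf (hG : G.IsAcyclic) (hlt : G.Adj l t) (hl : IsTreeLeaf G l)
    (ht : (G.neighborSet t).ncard = 3) (x : {x : V // x ≠ l ∧ x ≠ t}) :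
    ((G.pruneLeaf l t).neighborSet x).ncard = (G.neighborSet x).ncard := by
  have hl' : ∀ z, G.Adj l z → z = t := fun z hz => hl.eq_of_adj hz hlt
  rw [← Set.ncard_image_of_injective _ Subtype.val_injective]
  by_cases hxt : G.Adj x t
  · -- `x` trades its neighbour `t` for the other neighbour of `t` besides `l`
    have himage : Subtype.val '' (G.pruneLeaf l t).neighborSet x =
        G.neighborSet x \ {t} ∪ G.neighborSet t \ {l, ↑x} := by
      ext y
      simp only [ne_eq, Set.mem_image, mem_neighborSet, pruneLeaf_adj, Subtype.ext_iff,
        Subtype.exists, exists_and_left, exists_prop, exists_eq_right_right, Set.mem_union,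
        Set.mem_sdiff, Set.mem_singleton_iff, Set.mem_insert_iff, not_or]
      grind [SimpleGraph.adj_comm, SimpleGraph.irrefl]
    have hdisj : Disjoint (G.neighborSet x \ {t}) (G.neighborSet t \ {l, ↑x}) :=
      Set.disjoint_left.2 fun y hy hy' => hG.not_adj_of_adj_of_adj hxt hy'.1 hy.1
    rw [himage, Set.ncard_union_eq hdisj,
      Set.ncard_sdiff_singleton_of_mem (show t ∈ G.neighborSet x from hxt), Set.ncard_sdiff (by simp [Set.insert_subset_iff, hlt.symm, hxt.symm]), ht,
      Set.ncard_pair x.2.1.symm]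
    have : 0 < (G.neighborSet x).ncard := (Set.ncard_pos (Set.toFinite _)).2 ⟨t, hxt⟩
    omega
  · congr 1
    ext y
    simp only [ne_eq, Set.mem_image, mem_neighborSet, pruneLeaf_adj, Subtype.ext_iff,
      Subtype.exists, exists_and_left, exists_prop, exists_eq_right_right]
    grind [SimpleGraph.adj_comm, SimpleGraph.irrefl]

end SimpleGraph

section PruneCubicTree

variable {W : Type} [Finite W] {T : SimpleGraph W} {l t : W}

theorem isTreeLeaf_pruneLeaf_iff (hT : IsCubicTree T) (hlt : T.Adj l t) (hl : IsTreeLeaf T l)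
    (ht : ¬ IsTreeLeaf T t) (x : {x : W // x ≠ l ∧ x ≠ t}) :
    IsTreeLeaf (T.pruneLeaf l t) x ↔ IsTreeLeaf T x := by
  rw [IsTreeLeaf, IsTreeLeaf,
    SimpleGraph.ncard_neighborSet_pruneLeaf hT.1.isAcyclic hlt hl (hT.2 t ht)]

theorem IsCubicTree.pruneLeaf (hT : IsCubicTree T) (hlt : T.Adj l t) (hl : IsTreeLeaf T l)
    (ht : ¬ IsTreeLeaf T t) : IsCubicTree (T.pruneLeaf l t) := by
  refine ⟨hT.1.pruneLeaf hlt hl (hT.2 t ht), fun x hx => ?_⟩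
  rw [isTreeLeaf_pruneLeaf_iff hT hlt hl ht] at hx
  rw [SimpleGraph.ncard_neighborSet_pruneLeaf hT.1.isAcyclic hlt hl (hT.2 t ht), hT.2 x hx]

theorem exists_treeShore_pruneLeaf (hT : IsCubicTree T) (hlt : T.Adj l t) (hl : IsTreeLeaf T l)
    (ht : ¬ IsTreeLeaf T t) (φ : W → ℕ) {x y : {x : W // x ≠ l ∧ x ≠ t}}
    (hxy : (T.pruneLeaf l t).Adj x y) :
    ∃ v, T.Adj x v ∧ ∀ s ≠ φ l,
      s ∈ treeShore (T.pruneLeaf l t) (φ ∘ Subtype.val) x y ↔ s ∈ treeShore T φ x v := by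
  have hreach := fun w => SimpleGraph.reachable_pruneLeaf_deleteEdges_iff hT.1.isAcyclic hlt hl
    (hT.2 t ht) hxy (w₁ := x) (w₂ := w)
  refine ⟨if T.Adj x y then y else t, ?_, fun s hs => ⟨?_, ?_⟩⟩
  · split_ifs with hadj
    exacts [hadj, (hxy.2.resolve_left hadj).1]
  · rintro ⟨w, ⟨hwleaf, hw⟩, rfl⟩
    exact ⟨w, ⟨(isTreeLeaf_pruneLeaf_iff hT hlt hl ht w).1 hwleaf, (hreach w).1 hw⟩, rfl⟩
  · rintro ⟨w, ⟨hwleaf, hw⟩, rfl⟩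
    have hwW : w ≠ l ∧ w ≠ t := ⟨fun h => hs (congrArg φ h), fun h => ht (h ▸ hwleaf)⟩
    refine ⟨⟨w, hwW⟩, ⟨(isTreeLeaf_pruneLeaf_iff hT hlt hl ht _).2 hwleaf, (hreach _).2 hw⟩, rfl⟩

end PruneCubicTree

namespace SimpleGraph

variable {V : Type*} {G : SimpleGraph V} {v : V}

/-- Attach a new leaf `none` to the vertex `v`. -/
def addLeaf (G : SimpleGraph V) (v : V) : SimpleGraph (Option V) where
  Adj
    | some x, some y => G.Adj x y
    | some x, none | none, some x => x = v
    | none, none => False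
  symm := ⟨fun
    | some _, some _, h => h.symm
    | some _, none, h | none, some _, h => h
    | none, none, h => h⟩
  loopless := ⟨fun
    | some _, h => G.loopless.irrefl _ h
    | none, h => h⟩

@[simp] theorem addLeaf_adj_some_some {x y : V} : (G.addLeaf v).Adj (some x) (some y) ↔ G.Adj x y :=
  Iff.rfl

@[simp] theorem addLeaf_adj_some_none {x : V} : (G.addLeaf v).Adj (some x) none ↔ x = v := Iff.rfl

@[simp] theorem addLeaf_adj_none_some {x : V} : (G.addLeaf v).Adj none (some x) ↔ x = v := Iff.rfl

@[simp] theorem not_addLeaf_adj_none_none : ¬ (G.addLeaf v).Adj none none := id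

theorem ncard_neighborSet_addLeaf_none : ((G.addLeaf v).neighborSet none).ncard = 1 := by
  rw [Set.ncard_eq_one]
  exact ⟨some v, Set.ext fun o => by cases o <;> simp [eq_comm]⟩

theorem ncard_neighborSet_addLeaf_some [Finite V] (x : V) :
    ((G.addLeaf v).neighborSet (some x)).ncard =
      (G.neighborSet x).ncard + if x = v then 1 else 0 := by
  split_ifs with hxv
  · have : (G.addLeaf v).neighborSet (some x) = insert none (some '' G.neighborSet x) :=
      Set.ext fun o => by cases o <;> simp [hxv]
    rw [this, Set.ncard_insert_of_notMem (by simp),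
      Set.ncard_image_of_injective _ (Option.some_injective V)]
  · have : (G.addLeaf v).neighborSet (some x) = some '' G.neighborSet x :=
      Set.ext fun o => by cases o <;> simp [hxv]
    rw [this, Set.ncard_image_of_injective _ (Option.some_injective V), add_zero]

theorem IsTree.addLeaf (hG : G.IsTree) : (G.addLeaf v).IsTree := by
  have hreach : ∀ o, (G.addLeaf v).Reachable (some v) o
    | some x => (hG.connected.preconnected v x).map_of_forall_adj some
        fun _ _ h => Adj.reachable h
    | none => Adj.reachable rfl
  refine ⟨⟨fun o o' => (hreach o).symm.trans (hreach o')⟩, ?_⟩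
  have hbridge := isAcyclic_iff_forall_adj_isBridge.1 hG.isAcyclic
  have hnew : ¬ ((G.addLeaf v).deleteEdges {s(some v, none)}).Reachable (some v) none := by
    refine not_reachable_of_neighborSet_right_eq_empty (by simp) (Set.ext fun o => ?_)
    cases o <;> simp +contextual
  refine isAcyclic_iff_forall_adj_isBridge.2 fun
    | some x, some y, hxy, hr => hbridge hxy ?_
    | some x, none, hx, hr => hnew (by rwa [show x = v from hx] at hr)
    | none, some x, hx, hr => hnew (by rwa [show x = v from hx, Sym2.eq_swap, reachable_comm] at hr)
  -- retracting `none` onto `v` turns a path avoiding `xy` into one in `G`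
  refine hr.map_of_forall_adj (H := G.deleteEdges {s(x, y)}) (fun o => o.getD v) fun
    | some _, some _, h => Adj.reachable ⟨h.1, by simpa using h.2⟩
    | some _, none, h => by obtain rfl : _ = v := h.1; rfl
    | none, some _, h => by obtain rfl : _ = v := h.1; rfl
    | none, none, h => h.1.elim

end SimpleGraph

section Existence

variable {W : Type} [Finite W] {T : SimpleGraph W}

theorem IsCubicTree.addLeaf_addLeaf (hT : IsCubicTree T) {m t : W} (hm : IsTreeLeaf T m)
    (hmt : T.Adj m t) :
    IsCubicTree ((T.addLeaf m).addLeaf (some m)) ∧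
      {y | IsTreeLeaf ((T.addLeaf m).addLeaf (some m)) y}.ncard =
        {x | IsTreeLeaf T x}.ncard + 1 := by
  set T₂ := (T.addLeaf m).addLeaf (some m)
  have hm1 : (T.neighborSet m).ncard = 1 :=
    le_antisymm hm ((Set.ncard_pos (Set.toFinite _)).2 ⟨t, hmt⟩)
  have hdeg : ∀ x, (T₂.neighborSet (some (some x))).ncard =
      (T.neighborSet x).ncard + if x = m then 2 else 0 := fun x => by
    rw [SimpleGraph.ncard_neighborSet_addLeaf_some, SimpleGraph.ncard_neighborSet_addLeaf_some]
    split_ifs <;> simp_all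
  have hnone : (T₂.neighborSet none).ncard = 1 := SimpleGraph.ncard_neighborSet_addLeaf_none
  have hsome_none : (T₂.neighborSet (some none)).ncard = 1 := by
    rw [SimpleGraph.ncard_neighborSet_addLeaf_some, SimpleGraph.ncard_neighborSet_addLeaf_none]
    simp
  have hleaf : ∀ x, IsTreeLeaf T₂ (some (some x)) ↔ IsTreeLeaf T x ∧ x ≠ m := fun x => by
    rw [IsTreeLeaf, hdeg]
    split_ifs with hxm
    · simp [hxm, hm1]
    · simp [IsTreeLeaf, hxm]
  have hleaves : {y | IsTreeLeaf T₂ y} =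
      insert none (insert (some none) ((some ∘ some) '' ({x | IsTreeLeaf T x} \ {m}))) := by
    ext (_ | _ | x)
    · exact iff_of_true hnone.le (Set.mem_insert _ _)
    · exact iff_of_true hsome_none.le (by simp)
    · simp [hleaf]
  refine ⟨⟨hT.1.addLeaf.addLeaf, ?_⟩, ?_⟩
  · rintro (_ | _ | x) hy
    · exact (hy hnone.le).elim
    · exact (hy hsome_none.le).elim
    · by_cases hxm : x = m
      · rw [hdeg, if_pos hxm, hxm, hm1]
      · rw [hdeg, if_neg hxm, add_zero]
        exact hT.2 x fun hx => hy ((hleaf x).2 ⟨hx, hxm⟩)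
  · rw [hleaves, Set.ncard_insert_of_notMem (by simp), Set.ncard_insert_of_notMem (by simp),
      Set.ncard_image_of_injective _ ((Option.some_injective _).comp (Option.some_injective _)),
      Set.ncard_sdiff_singleton_of_mem (show m ∈ {x | IsTreeLeaf T x} from hm)]
    have : 0 < {x | IsTreeLeaf T x}.ncard := (Set.ncard_pos (Set.toFinite _)).2 ⟨m, hm⟩
    omega

end Existence

theorem exists_isCubicTree_ncard_eq {n : ℕ} (hn : n ≠ 0) :
    ∃ (W : Type) (_ : Fintype W) (T : SimpleGraph W),
      IsCubicTree T ∧ {l | IsTreeLeaf T l}.ncard = n := by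
  induction n using Nat.strong_induction_on with
  | _ n ih =>
  by_cases hn2 : n ≤ 2
  · have : Nonempty (Fin n) := ⟨⟨0, by omega⟩⟩
    have hW : Nat.card (Fin n) ≤ 2 := by simpa using hn2
    exact ⟨Fin n, inferInstance, ⊤, isCubicTree_top hW, by simp [isTreeLeaf_top hW]⟩
  obtain ⟨W, _, T, hT, hcard⟩ := ih (n - 1) (by omega) (by omega)
  obtain ⟨m, hm, m', -, hmm'⟩ := (Set.one_lt_ncard (Set.toFinite _)).1
    (by omega : 1 < {l | IsTreeLeaf T l}.ncard)
  have : Nontrivial W := nontrivial_of_ne m m' hmm'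
  obtain ⟨t, hmt⟩ := hT.1.connected.preconnected.exists_adj_of_nontrivial m
  obtain ⟨hT₂, hcard₂⟩ := hT.addLeaf_addLeaf hm hmt
  exact ⟨_, inferInstance, _, hT₂, by omega⟩

namespace Dgraph

theorem cutArcs_congr (D : Dgraph) {X Y : Set ℕ} (h : ∀ u ∈ D.verts, u ∈ X ↔ u ∈ Y) :
    D.cutArcs X = D.cutArcs Y :=
  Finset.filter_congr fun a ha => by
    rw [h _ (D.arcs_mem a ha).1, h _ (D.arcs_mem a ha).2]

theorem cycPorosity_congr (D : Dgraph) {X Y : Set ℕ} (h : ∀ u ∈ D.verts, u ∈ X ↔ u ∈ Y) :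
    D.cycPorosity X = D.cycPorosity Y := by
  rw [cycPorosity, cycPorosity, D.cutArcs_congr h]

theorem IsSubgraph.cycPorosity_le {H D : Dgraph} (h : H.IsSubgraph D) (X : Set ℕ) :
    H.cycPorosity X ≤ D.cycPorosity X := by
  have hfam : H.arcs.powerset.filter H.IsCycleFamily ⊆ D.arcs.powerset.filter D.IsCycleFamily := by
    intro F hF
    simp only [Finset.mem_filter, Finset.mem_powerset] at hF ⊢
    exact ⟨hF.1.trans h.2, hF.1.trans h.2, hF.2.2⟩
  calc H.cycPorosity X
      ≤ (H.arcs.powerset.filter H.IsCycleFamily).sup fun F => (D.cutArcs X ∩ F).card :=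
        Finset.sup_mono_fun fun F _ => Finset.card_le_card <|
          Finset.inter_subset_inter_right (Finset.filter_subset_filter _ h.2)
    _ ≤ D.cycPorosity X := Finset.sup_mono hfam

end Dgraph

namespace CycleDecomp

variable {D : Dgraph}

theorem cycPorosity_le_width (c : CycleDecomp D) {u v : c.W} (h : c.T.Adj u v) :
    D.cycPorosity (treeShore c.T c.φ u v) ≤ c.width := by
  let _ := c.fin
  exact (if_pos h).symm.trans_le (Finset.le_sup (f := fun p : c.W × c.W =>
    if c.T.Adj p.1 p.2 then D.cycPorosity (treeShore c.T c.φ p.1 p.2) else 0)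
    (Finset.mem_univ (u, v)))

theorem width_le (c : CycleDecomp D) {k : ℕ}
    (h : ∀ u v, c.T.Adj u v → D.cycPorosity (treeShore c.T c.φ u v) ≤ k) : c.width ≤ k := by
  let _ := c.fin
  refine Finset.sup_le fun p _ => ?_
  split_ifs with hp
  exacts [h _ _ hp, Nat.zero_le k]

theorem verts_nonempty (c : CycleDecomp D) : D.verts.Nonempty := by
  let _ := c.fin
  obtain ⟨l, hl⟩ := c.cubic.1.exists_isTreeLeaf
  exact ⟨c.φ l, c.bij.mapsTo hl⟩

theorem exists_width_eq_zero_of_verts_eq_singleton {p : ℕ} (hD : D.verts = {p}) :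
    ∃ c : CycleDecomp D, c.width = 0 := by
  have hW : Nat.card Unit ≤ 2 := by simp
  refine ⟨⟨Unit, inferInstance, ⊤, isCubicTree_top hW, fun _ => p, ?_⟩, ?_⟩
  · rw [hD, Finset.coe_singleton]
    exact ⟨fun _ _ => rfl, fun _ _ _ _ _ => rfl, fun _ hq => ⟨(), isTreeLeaf_top hW (), hq.symm⟩⟩
  · exact Nat.le_zero.1 (width_le _ fun u v huv => (huv.ne (Subsingleton.elim u v)).elim)

theorem exists_width_le_of_isCubicTree (hD : D.verts.Nonempty) {k : ℕ} {W : Type} [Finite W]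
    {T : SimpleGraph W} (hT : IsCubicTree T) {φ : W → ℕ}
    (hinj : Set.InjOn φ {l | IsTreeLeaf T l}) (hsub : ↑D.verts ⊆ φ '' {l | IsTreeLeaf T l})
    (hk : ∀ u v, T.Adj u v → D.cycPorosity (treeShore T φ u v) ≤ k) :
    ∃ c : CycleDecomp D, c.width ≤ k := by
  induction hn : Nat.card W using Nat.strong_induction_on generalizing W with
  | _ n ih =>
  by_cases hall : Set.MapsTo φ {l | IsTreeLeaf T l} D.verts
  · exact ⟨⟨W, Fintype.ofFinite W, T, hT, φ, hall, hinj, hsub⟩, width_le _ hk⟩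
  obtain ⟨l, hl, hlD⟩ : ∃ l, IsTreeLeaf T l ∧ φ l ∉ D.verts := by
    simpa [Set.MapsTo] using hall
  obtain ⟨p, hp⟩ := hD
  by_cases hsingle : D.verts = {p}
  · obtain ⟨c, hc⟩ := exists_width_eq_zero_of_verts_eq_singleton hsingle
    exact ⟨c, hc ▸ Nat.zero_le k⟩
  obtain ⟨q, hq, hqp⟩ : ∃ q ∈ D.verts, q ≠ p := by
    by_contra! h
    exact hsingle (Finset.eq_singleton_iff_unique_mem.2 ⟨hp, h⟩)
  obtain ⟨x, -, rfl⟩ := hsub hp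
  obtain ⟨y, -, rfl⟩ := hsub hq
  -- prune a leaf labelled outside `D`: since `D` has two vertices, its neighbour is inner
  obtain ⟨t, hlt, ht⟩ := exists_adj_not_isTreeLeaf hT.1.connected hl (x := x) (y := y)
    (by rintro rfl; exact hlD hp) (by rintro rfl; exact hlD hq) (by rintro rfl; exact hqp rfl)
  have hleaf := isTreeLeaf_pruneLeaf_iff hT hlt hl ht
  refine ih _ (hn ▸ Finite.card_subtype_lt (x := l) (by simp)) (hT.pruneLeaf hlt hl ht)
    (φ := φ ∘ Subtype.val) ?_ ?_ ?_ rfl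
  · exact fun a ha b hb hab => Subtype.ext (hinj ((hleaf a).1 ha) ((hleaf b).1 hb) hab)
  · intro s hs
    obtain ⟨w, hw, rfl⟩ := hsub hs
    have hwW : w ≠ l ∧ w ≠ t := ⟨by rintro rfl; exact hlD hs, by rintro rfl; exact ht hw⟩
    exact ⟨⟨w, hwW⟩, (hleaf _).2 hw, rfl⟩
  · intro u v huv
    obtain ⟨v', huv', hshore⟩ := exists_treeShore_pruneLeaf hT hlt hl ht φ huv
    rw [D.cycPorosity_congr fun s hs => hshore s (by rintro rfl; exact hlD hs)]
    exact hk _ _ huv'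

end CycleDecomp

theorem Dgraph.nonempty_cycleDecomp (D : Dgraph) (hD : D.verts.Nonempty) :
    Nonempty (CycleDecomp D) := by
  obtain ⟨W, _, T, hT, hcard⟩ := exists_isCubicTree_ncard_eq hD.card_pos.ne'
  obtain ⟨φ, hφ⟩ := (Set.toFinite {l | IsTreeLeaf T l}).exists_bijOn_of_encard_eq
    (t := (D.verts : Set ℕ)) (by
      rw [(Set.toFinite _).cast_ncard_eq.symm, hcard, Set.encard_coe_eq_coe_finsetCard])
  exact ⟨⟨W, inferInstance, T, hT, φ, hφ⟩⟩

/-- Cyclewidth is monotone under subgraphs. -/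
theorem cycleWidth_le_of_isSubgraph (D D' : Dgraph) (h : D'.IsSubgraph D) :
    cycleWidth D' ≤ cycleWidth D := by
  rcases D'.verts.eq_empty_or_nonempty with hD' | hD'
  · -- without vertices there is no cycle decomposition, and `sInf ∅ = 0`
    have : {k | ∃ c : CycleDecomp D', c.width = k} = ∅ :=
      Set.eq_empty_of_forall_notMem fun _ ⟨c, _⟩ => c.verts_nonempty.ne_empty hD'
    simp [cycleWidth, this]
  obtain ⟨c⟩ := D.nonempty_cycleDecomp (hD'.mono h.1)
  obtain ⟨c₀, hc₀⟩ : ∃ c₀ : CycleDecomp D, c₀.width = cycleWidth D :=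
    Nat.sInf_mem (s := {k | ∃ c : CycleDecomp D, c.width = k}) ⟨c.width, c, rfl⟩
  let _ := c₀.fin
  obtain ⟨c', hc'⟩ := CycleDecomp.exists_width_le_of_isCubicTree hD' c₀.cubic c₀.bij.injOn
    ((Finset.coe_subset.2 h.1).trans c₀.bij.image_eq.symm.subset)
    fun u v huv => (h.cycPorosity_le _).trans (c₀.cycPorosity_le_width huv)
  calc cycleWidth D' ≤ c'.width := Nat.sInf_le ⟨c', rfl⟩
    _ ≤ c₀.width := hc'
    _ = cycleWidth D := hc₀
end

section
/- Let T be a tree in which every inner vertex has degree exactly 3, let V be a finite set with |V| ≥ 3, and let φ be a bijection from the leaves of T to V. Then T contains an edge e such that the bipartition (X, V − X) of V induced by the two components of T − e (via φ) is balanced, i.e., |X| ≥ |V|/3 and |V − X| ≥ |V|/3. -/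
open scoped Classical

/-!
For an edge `uv` of a cubic tree with `n` leaves let `f u v` be the number of leaves on the
`u`-side of `uv`, so that `f u v + f v u = n`, `f u v ≥ 1`, and `f u v = f a u + f b u` whenever
`u` is an inner vertex with further neighbours `a`, `b`. Among the oriented edges with
`f u v ≤ 2n/3` take one maximising `f u v`. If `f u v < n/3`, the larger of `f a v`, `f b v`
(for the other neighbours `a`, `b` of `v`) lies strictly between `f u v` and `f v u`; whichever
of the two orientations of that edge has at most `2n/3` leaves then beats `uv`.
-/

namespace SimpleGraph

variable {V : Type*} {G : SimpleGraph V} {u v x a b : V}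

def edgeSide (G : SimpleGraph V) (u v : V) : Set V :=
  {x | (G.deleteEdges {s(u, v)}).Reachable u x}

theorem mem_edgeSide_iff : x ∈ G.edgeSide u v ↔ ∃ p : G.Walk u x, s(u, v) ∉ p.edges :=
  reachable_deleteEdges_iff_exists_walk

theorem self_mem_edgeSide : u ∈ G.edgeSide u v :=
  Reachable.refl u

theorem Reachable.mem_edgeSide_or_mem_edgeSide (hx : G.Reachable u x) :
    x ∈ G.edgeSide u v ∨ x ∈ G.edgeSide v u := by
  rw [reachable_iff_reflTransGen] at hx
  induction hx with
  | refl => exact .inl self_mem_edgeSide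
  | @tail y z _ hyz ih =>
    by_cases he : s(y, z) = s(u, v)
    · rcases Sym2.eq_iff.mp he with ⟨rfl, rfl⟩ | ⟨rfl, rfl⟩
      · exact .inr self_mem_edgeSide
      · exact .inl self_mem_edgeSide
    · have huv : (G.deleteEdges {s(u, v)}).Adj y z := by simp [hyz, he]
      have hvu : (G.deleteEdges {s(v, u)}).Adj y z := by simp [hyz, he, Sym2.eq_swap]
      exact ih.imp (·.trans huv.reachable) (·.trans hvu.reachable)

theorem Reachable.exists_adj_mem_edgeSide (hx : G.Reachable u x) (hxu : x ≠ u) :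
    ∃ c, G.Adj u c ∧ x ∈ G.edgeSide c u := by
  obtain ⟨p, hp⟩ := hx.exists_isPath
  cases p with
  | nil => exact absurd rfl hxu
  | cons huc q =>
    rw [Walk.cons_isPath_iff] at hp
    exact ⟨_, huc, mem_edgeSide_iff.mpr
      ⟨q, fun he => hp.2 (q.snd_mem_support_of_mem_edges he)⟩⟩

theorem adj_of_neighborSet_sdiff_eq_pair (hnbr : G.neighborSet u \ {v} = {a, b}) :
    G.Adj u a ∧ a ≠ v :=
  (hnbr ▸ Set.mem_insert a {b} : a ∈ G.neighborSet u \ {v})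

namespace IsAcyclic

variable (hG : G.IsAcyclic)
include hG

theorem exists_walk_notMem_support_of_mem_edgeSide (huv : G.Adj u v) (hx : x ∈ G.edgeSide u v) :
    ∃ p : G.Walk u x, v ∉ p.support := by
  obtain ⟨p, hp⟩ := mem_edgeSide_iff.mp hx
  refine ⟨p, fun hv => isBridge_iff.mp (isAcyclic_iff_forall_adj_isBridge.mp hG huv) ?_⟩
  exact reachable_deleteEdges_iff_exists_walk.mpr
    ⟨p.takeUntil v hv, fun he => hp (p.edges_takeUntil_subset_edges hv he)⟩

theorem disjoint_edgeSide (huv : G.Adj u v) : Disjoint (G.edgeSide u v) (G.edgeSide v u) :=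
  Set.disjoint_left.mpr fun _ hu hv => isBridge_iff.mp
    (isAcyclic_iff_forall_adj_isBridge.mp hG huv) (hu.trans (by rw [Sym2.eq_swap]; exact hv.symm))

theorem edgeSide_subset (hua : G.Adj u a) (hav : a ≠ v) :
    G.edgeSide a u ⊆ G.edgeSide u v := by
  intro x hx
  obtain ⟨p, hp⟩ := hG.exists_walk_notMem_support_of_mem_edgeSide hua.symm hx
  refine mem_edgeSide_iff.mpr ⟨.cons hua p, ?_⟩
  rw [Walk.edges_cons, List.mem_cons, not_or]
  exact ⟨fun h => hav (Sym2.congr_right.mp h).symm,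
    fun h => hp (p.fst_mem_support_of_mem_edges h)⟩

theorem disjoint_edgeSide_of_ne (hua : G.Adj u a) (hub : G.Adj u b) (hab : a ≠ b) :
    Disjoint (G.edgeSide a u) (G.edgeSide b u) :=
  (hG.disjoint_edgeSide hua.symm).mono_right (hG.edgeSide_subset hub hab.symm)

theorem edgeSide_eq_insert_union (huv : G.Adj u v) (hnbr : G.neighborSet u \ {v} = {a, b}) :
    G.edgeSide u v = insert u (G.edgeSide a u ∪ G.edgeSide b u) := by
  obtain ⟨hua, hav⟩ := adj_of_neighborSet_sdiff_eq_pair hnbr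
  obtain ⟨hub, hbv⟩ := adj_of_neighborSet_sdiff_eq_pair (Set.pair_comm a b ▸ hnbr)
  refine subset_antisymm (fun x hx => ?_) (Set.insert_subset self_mem_edgeSide
    (Set.union_subset (hG.edgeSide_subset hua hav) (hG.edgeSide_subset hub hbv)))
  rcases eq_or_ne x u with rfl | hxu
  · exact Set.mem_insert _ _
  obtain ⟨c, huc, hxc⟩ := (hx.mono (deleteEdges_le _)).exists_adj_mem_edgeSide hxu
  rcases eq_or_ne c v with rfl | hcv
  · exact absurd hx (Set.disjoint_right.mp (hG.disjoint_edgeSide huv) hxc)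
  have hc : c ∈ ({a, b} : Set V) := hnbr ▸ ⟨huc, hcv⟩
  rcases hc with rfl | rfl
  · exact .inr (.inl hxc)
  · exact .inr (.inr hxc)

theorem edgeSide_subset_singleton [Finite V] (huv : G.Adj u v)
    (hu : (G.neighborSet u).ncard ≤ 1) : G.edgeSide u v ⊆ {u} := by
  intro x hx
  by_contra hxu
  obtain ⟨c, huc, hxc⟩ := (hx.mono (deleteEdges_le _)).exists_adj_mem_edgeSide hxu
  obtain rfl : c = v := Set.ncard_le_one_iff_subsingleton.mp hu huc huv
  exact Set.disjoint_right.mp (hG.disjoint_edgeSide huv) hxc hx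

end IsAcyclic

theorem IsTree.compl_edgeSide (hG : G.IsTree) (huv : G.Adj u v) :
    (G.edgeSide u v)ᶜ = G.edgeSide v u := by
  ext x
  exact ⟨((hG.connected.preconnected u x).mem_edgeSide_or_mem_edgeSide).resolve_left,
    fun hx hx' => Set.disjoint_left.mp (hG.isAcyclic.disjoint_edgeSide huv) hx' hx⟩

theorem exists_adj_balanced [Finite V] (f : V → V → ℕ) (n : ℕ) (hn : 3 ≤ n)
    (hG : ∃ u v, G.Adj u v)
    (hsum : ∀ ⦃u v⦄, G.Adj u v → f u v + f v u = n)
    (hpos : ∀ ⦃u v⦄, G.Adj u v → 0 < f u v)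
    (hsplit : ∀ ⦃u v⦄, G.Adj u v → 2 ≤ f u v →
      ∃ a b, G.Adj a u ∧ G.Adj b u ∧ f u v = f a u + f b u) :
    ∃ u v, G.Adj u v ∧ n ≤ 3 * f u v ∧ n ≤ 3 * f v u := by
  set cand : Set (V × V) := {p | G.Adj p.1 p.2 ∧ 3 * f p.1 p.2 ≤ 2 * n}
  have hcand : cand.Nonempty := by
    obtain ⟨u, v, huv⟩ := hG
    by_cases h : 3 * f u v ≤ 2 * n
    · exact ⟨(u, v), huv, h⟩
    · exact ⟨(v, u), huv.symm, show 3 * f v u ≤ 2 * n by have := hsum huv; omega⟩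
  obtain ⟨⟨u, v⟩, ⟨huv, hle⟩, hmax⟩ :=
    cand.exists_max_image (fun p => f p.1 p.2) cand.toFinite hcand
  dsimp only at huv hle
  have hmax' : ∀ ⦃c d⦄, G.Adj c d → 3 * f c d ≤ 2 * n → f c d ≤ f u v :=
    fun c d hcd h => hmax (c, d) ⟨hcd, h⟩
  have huv' := hsum huv
  refine ⟨u, v, huv, ?_, by omega⟩
  by_contra! hlt
  obtain ⟨a, b, hav, hbv, hab⟩ := hsplit huv.symm (by omega)
  have key : ∀ c, G.Adj c v → f v u ≤ 2 * f c v → f c v < f v u → False := by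
    intro c hcv hbig hsmall
    have := hsum hcv
    by_cases hc : 3 * f c v ≤ 2 * n
    · have := hmax' hcv hc
      omega
    · have := hmax' hcv.symm (by omega)
      omega
  have ha := hpos hav
  have hb := hpos hbv
  rcases le_total (f b v) (f a v) with h | h
  · exact key a hav (by omega) (by omega)
  · exact key b hbv (by omega) (by omega)

end SimpleGraph

open SimpleGraph

section CubicTree

variable {W : Type} {T : SimpleGraph W} {u v a b : W}

def leafSide (T : SimpleGraph W) (u v : W) : Set W :=
  {l | IsTreeLeaf T l} ∩ T.edgeSide u v

theorem treeShore_eq_image (φ : W → ℕ) : treeShore T φ u v = φ '' leafSide T u v :=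
  rfl

theorem ncard_treeShore {φ : W → ℕ} (hφ : Set.InjOn φ {l | IsTreeLeaf T l}) :
    (treeShore T φ u v).ncard = (leafSide T u v).ncard :=
  (hφ.mono Set.inter_subset_left).ncard_image

theorem leaves_sdiff_edgeSide (hT : T.IsTree) (huv : T.Adj u v) :
    {l | IsTreeLeaf T l} \ T.edgeSide u v = leafSide T v u := by
  rw [Set.sdiff_eq, hT.compl_edgeSide huv]
  rfl

theorem sdiff_treeShore (hT : T.IsTree) (huv : T.Adj u v) {φ : W → ℕ} {S : Set ℕ}
    (hφ : Set.BijOn φ {l | IsTreeLeaf T l} S) :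
    S \ treeShore T φ u v = treeShore T φ v u := by
  rw [← hφ.image_eq, treeShore_eq_image, treeShore_eq_image, leafSide, ← hφ.injOn.image_sdiff,
    leaves_sdiff_edgeSide hT huv]

theorem ncard_leafSide_add_ncard_leafSide [Finite W] (hT : T.IsTree) (huv : T.Adj u v) :
    (leafSide T u v).ncard + (leafSide T v u).ncard = {l | IsTreeLeaf T l}.ncard := by
  rw [← leaves_sdiff_edgeSide hT huv]
  exact Set.ncard_inter_add_ncard_sdiff_eq_ncard _ _

theorem ncard_leafSide_le_one [Finite W] (hT : T.IsAcyclic) (huv : T.Adj u v)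
    (hu : IsTreeLeaf T u) : (leafSide T u v).ncard ≤ 1 :=
  (Set.ncard_le_ncard (Set.inter_subset_right.trans (hT.edgeSide_subset_singleton huv hu))).trans
    (Set.ncard_singleton u).le

theorem ncard_leafSide_eq_add [Finite W] (hT : T.IsAcyclic) (huv : T.Adj u v)
    (hu : ¬IsTreeLeaf T u) (hab : a ≠ b) (hnbr : T.neighborSet u \ {v} = {a, b}) :
    (leafSide T u v).ncard = (leafSide T a u).ncard + (leafSide T b u).ncard := by
  have hua := (adj_of_neighborSet_sdiff_eq_pair hnbr).1
  have hub := (adj_of_neighborSet_sdiff_eq_pair (Set.pair_comm a b ▸ hnbr)).1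
  have hdisj : Disjoint (leafSide T a u) (leafSide T b u) :=
    (hT.disjoint_edgeSide_of_ne hua hub hab).mono Set.inter_subset_right Set.inter_subset_right
  rw [← Set.ncard_union_eq hdisj]
  congr 1
  rw [leafSide, hT.edgeSide_eq_insert_union huv hnbr,
    Set.inter_insert_of_notMem (show u ∉ {l | IsTreeLeaf T l} from hu),
    Set.inter_union_distrib_left]
  rfl

theorem IsCubicTree.exists_neighborSet_sdiff_eq_pair [Finite W] (hT : IsCubicTree T)
    (huv : T.Adj u v) (hu : ¬IsTreeLeaf T u) :
    ∃ a b, a ≠ b ∧ T.neighborSet u \ {v} = {a, b} :=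
  Set.ncard_eq_two.mp <| by
    rw [Set.ncard_sdiff_singleton_of_mem ((T.mem_neighborSet u v).mpr huv), hT.2 u hu]

theorem IsCubicTree.one_le_ncard_leafSide [Finite W] (hT : IsCubicTree T) (u v : W)
    (huv : T.Adj u v) : 1 ≤ (leafSide T u v).ncard := by
  by_cases hu : IsTreeLeaf T u
  · exact (Set.ncard_pos).mpr ⟨u, hu, self_mem_edgeSide⟩
  obtain ⟨a, b, -, hnbr⟩ := hT.exists_neighborSet_sdiff_eq_pair huv hu
  obtain ⟨hua, hav⟩ := adj_of_neighborSet_sdiff_eq_pair hnbr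
  have hsub : T.edgeSide a u ⊂ T.edgeSide u v := (Set.ssubset_iff_of_subset
    (hT.1.isAcyclic.edgeSide_subset hua hav)).mpr ⟨u, self_mem_edgeSide,
      Set.disjoint_left.mp (hT.1.isAcyclic.disjoint_edgeSide hua) self_mem_edgeSide⟩
  exact (hT.one_le_ncard_leafSide a u hua.symm).trans
    (Set.ncard_le_ncard (Set.inter_subset_inter_right _ hsub.subset))
termination_by (T.edgeSide u v).ncard
decreasing_by exact Set.ncard_lt_ncard hsub

theorem IsCubicTree.exists_ncard_leafSide_eq_add [Finite W] (hT : IsCubicTree T)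
    (huv : T.Adj u v) (h2 : 2 ≤ (leafSide T u v).ncard) :
    ∃ a b, T.Adj a u ∧ T.Adj b u ∧
      (leafSide T u v).ncard = (leafSide T a u).ncard + (leafSide T b u).ncard := by
  have hu : ¬IsTreeLeaf T u := fun hu => by
    have := ncard_leafSide_le_one hT.1.isAcyclic huv hu
    omega
  obtain ⟨a, b, hab, hnbr⟩ := hT.exists_neighborSet_sdiff_eq_pair huv hu
  exact ⟨a, b, (adj_of_neighborSet_sdiff_eq_pair hnbr).1.symm,
    (adj_of_neighborSet_sdiff_eq_pair (Set.pair_comm a b ▸ hnbr)).1.symm,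
    ncard_leafSide_eq_add hT.1.isAcyclic huv hu hab hnbr⟩

end CubicTree

/-- Every cubic tree whose leaves are in bijection with a finite set
`S` with `|S| ≥ 3` has an edge inducing a balanced bipartition of `S`: both parts have
size at least `|S|/3`. -/
theorem exists_balanced_edge {W : Type} [Fintype W] (T : SimpleGraph W)
    (hT : IsCubicTree T) (S : Finset ℕ) (φ : W → ℕ)
    (hbij : Set.BijOn φ {l | IsTreeLeaf T l} ↑S) (hS : 3 ≤ S.card) :
    ∃ t₁ t₂ : W, T.Adj t₁ t₂ ∧
      S.card ≤ 3 * (treeShore T φ t₁ t₂).ncard ∧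
      S.card ≤ 3 * ((↑S : Set ℕ) \ treeShore T φ t₁ t₂).ncard := by
  have hleaves : {l | IsTreeLeaf T l}.ncard = S.card := by
    rw [hbij.ncard_eq, Set.ncard_coe_finset]
  have hedge : ∃ u v, T.Adj u v := by
    obtain ⟨l, l', -, -, hne⟩ :=
      (Set.one_lt_ncard_iff (s := {l | IsTreeLeaf T l})).mp (by omega)
    have := nontrivial_of_ne l l' hne
    exact ⟨l, hT.1.connected.preconnected.exists_adj_of_nontrivial l⟩
  obtain ⟨u, v, huv, hu, hv⟩ :=
    exists_adj_balanced (fun u v => (leafSide T u v).ncard) S.card hS hedge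
      (fun _ _ huv => (ncard_leafSide_add_ncard_leafSide hT.1 huv).trans hleaves)
      (fun u v huv => hT.one_le_ncard_leafSide u v huv)
      (fun _ _ huv h2 => hT.exists_ncard_leafSide_eq_add huv h2)
  refine ⟨u, v, huv, ?_, ?_⟩
  · rwa [ncard_treeShore hbij.injOn]
  · rwa [sdiff_treeShore hT.1 huv hbij, ncard_treeShore hbij.injOn]
end

section
/- A digraph D is strongly connected if and only if there exists a pair, unique up to isomorphism, consisting of a bipartite matching covered graph G and a perfect matching M of G such that D is isomorphic to the M-direction D(G, M). -/
open scoped Classical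

/-- A finite simple (undirected, loopless) graph on a subset of `ℕ`. -/
structure UGraph where
  verts : Finset ℕ
  edges : Finset (Sym2 ℕ)
  no_loops : ∀ e ∈ edges, ¬ e.IsDiag
  mem_verts : ∀ e ∈ edges, ∀ v ∈ e, v ∈ verts

def UGraph.Adj (G : UGraph) (a b : ℕ) : Prop := s(a, b) ∈ G.edges

/-- A matching of `G`: a set of edges no two of which share an endpoint. -/
def UGraph.IsMatching (G : UGraph) (M : Finset (Sym2 ℕ)) : Prop :=
  M ⊆ G.edges ∧ ∀ e ∈ M, ∀ f ∈ M, e ≠ f → ∀ v, v ∈ e → v ∉ f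

/-- A perfect matching of `G`: a matching covering every vertex. -/
def UGraph.IsPerfectMatching (G : UGraph) (M : Finset (Sym2 ℕ)) : Prop :=
  G.IsMatching M ∧ ∀ v ∈ G.verts, ∃ e ∈ M, v ∈ e

def UGraph.Connected (G : UGraph) : Prop :=
  G.verts.Nonempty ∧ ∀ u ∈ G.verts, ∀ v ∈ G.verts, Relation.ReflTransGen G.Adj u v

/-- A graph is matching covered if it is connected and every edge lies in some perfect
matching. -/
def UGraph.MatchingCovered (G : UGraph) : Prop :=
  G.Connected ∧ ∀ e ∈ G.edges, ∃ M, G.IsPerfectMatching M ∧ e ∈ M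

/-- The subgraph induced on the vertex set `S`. -/
noncomputable def UGraph.induce (G : UGraph) (S : Set ℕ) : UGraph where
  verts := G.verts.filter fun v => v ∈ S
  edges := G.edges.filter fun e => ∀ v ∈ e, v ∈ S
  no_loops := fun e he => G.no_loops e (Finset.mem_filter.mp he).1
  mem_verts := by
    intro e he v hv
    rw [Finset.mem_filter] at he ⊢
    exact ⟨G.mem_verts e he.1 v hv, he.2 v hv⟩

/-- `A` induces a bipartition of `G`: every edge has exactly one endpoint in `A`. -/
def UGraph.IsBipartition (G : UGraph) (A : Set ℕ) : Prop :=
  ∀ e ∈ G.edges, ∃ a b, e = s(a, b) ∧ a ∈ A ∧ b ∉ A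

/-- The cut of `G` at `X`: all edges with exactly one endpoint in `X`. -/
noncomputable def UGraph.edgeCut (G : UGraph) (X : Set ℕ) : Finset (Sym2 ℕ) :=
  G.edges.filter fun e => ∃ a b, e = s(a, b) ∧ a ∈ X ∧ b ∉ X

/-- The matching porosity of the cut at `X`: the maximum number of edges of a perfect
matching crossing the cut. -/
noncomputable def UGraph.matchPorosity (G : UGraph) (X : Set ℕ) : ℕ :=
  (G.edges.powerset.filter fun M => G.IsPerfectMatching M).sup fun M =>
    (G.edgeCut X ∩ M).card

/-- A perfect matching decomposition of `G`: a cubic tree together with a bijection `δ`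
between its leaves and the vertices of `G`. -/
structure PMDecomp (G : UGraph) where
  W : Type
  fin : Fintype W
  T : SimpleGraph W
  cubic : IsCubicTree T
  δ : W → ℕ
  bij : Set.BijOn δ {l | IsTreeLeaf T l} ↑G.verts

/-- The width of a perfect matching decomposition: the maximum matching porosity over
the cuts induced by the edges of the tree. -/
noncomputable def PMDecomp.width {G : UGraph} (d : PMDecomp G) : ℕ :=
  letI := d.fin
  Finset.univ.sup fun p : d.W × d.W =>
    if d.T.Adj p.1 p.2 then G.matchPorosity (treeShore d.T d.δ p.1 p.2) else 0

/-- The perfect matching width of `G`. -/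
noncomputable def pmWidth (G : UGraph) : ℕ :=
  sInf {k | ∃ d : PMDecomp G, d.width = k}

/-- `S` is an `M`-conformal set: `M` restricted to `S` is a perfect matching of `G[S]`
and `M` restricted to the complement of `S` is a perfect matching of `G − S`. -/
def UGraph.MConformalSet (G : UGraph) (M : Finset (Sym2 ℕ)) (S : Set ℕ) : Prop :=
  (G.induce S).IsPerfectMatching (M.filter fun e => ∀ v ∈ e, v ∈ S) ∧
  (G.induce Sᶜ).IsPerfectMatching (M.filter fun e => ∀ v ∈ e, v ∉ S)

/-- A perfect matching decomposition all of whose inner edges induce cuts with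
`M`-conformal shores. -/
def PMDecomp.MConformal {G : UGraph} (d : PMDecomp G) (M : Finset (Sym2 ℕ)) : Prop :=
  ∀ t₁ t₂ : d.W, d.T.Adj t₁ t₂ → ¬ IsTreeLeaf d.T t₁ → ¬ IsTreeLeaf d.T t₂ →
    G.MConformalSet M (treeShore d.T d.δ t₁ t₂) ∧
    G.MConformalSet M (treeShore d.T d.δ t₂ t₁)

/-- The `M`-perfect matching width of `G`. -/
noncomputable def mpmWidth (G : UGraph) (M : Finset (Sym2 ℕ)) : ℕ :=
  sInf {k | ∃ d : PMDecomp G, d.MConformal M ∧ d.width = k}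

/-- The `M`-direction of a bipartite graph `G` with bipartition class `A` and perfect
matching `M`: matching edges are contracted (each resulting vertex being named by the
`A`-endpoint of its matching edge) and all other edges are oriented from `A` to the
other class. -/
noncomputable def mDirection (G : UGraph) (A : Set ℕ) (M : Finset (Sym2 ℕ)) : Dgraph where
  verts := G.verts.filter fun v => v ∈ A
  arcs := ((G.verts.filter fun v => v ∈ A) ×ˢ (G.verts.filter fun v => v ∈ A)).filter
    fun p => p.1 ≠ p.2 ∧ ∃ b, b ∉ A ∧ s(p.2, b) ∈ M ∧ s(p.1, b) ∈ G.edges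
  arcs_mem := by
    intro a ha
    rw [Finset.mem_filter, Finset.mem_product] at ha
    exact ha.1
  no_loops := fun a ha => ((Finset.mem_filter.mp ha).2).1

/-- A digraph is strongly connected if it is nonempty and every vertex can reach every
other vertex by a directed path. -/
def Dgraph.StronglyConnected (D : Dgraph) : Prop :=
  D.verts.Nonempty ∧ ∀ u ∈ D.verts, ∀ v ∈ D.verts,
    Relation.ReflTransGen (fun a b => (a, b) ∈ D.arcs) u v

/-- Isomorphism of digraphs. -/
def DgraphIso (D D' : Dgraph) : Prop :=
  ∃ f : ℕ → ℕ, Set.BijOn f ↑D.verts ↑D'.verts ∧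
    ∀ u ∈ D.verts, ∀ v ∈ D.verts, ((u, v) ∈ D.arcs ↔ (f u, f v) ∈ D'.arcs)

/-- Isomorphism of graphs. -/
def UGraphIso (G G' : UGraph) : Prop :=
  ∃ f : ℕ → ℕ, Set.BijOn f ↑G.verts ↑G'.verts ∧
    ∀ u ∈ G.verts, ∀ v ∈ G.verts, (s(u, v) ∈ G.edges ↔ s(f u, f v) ∈ G'.edges)

/-- Isomorphism of pairs consisting of a graph and a perfect matching. -/
def MatchedUGraphIso (G : UGraph) (M : Finset (Sym2 ℕ)) (G' : UGraph)
    (M' : Finset (Sym2 ℕ)) : Prop :=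
  ∃ f : ℕ → ℕ, Set.BijOn f ↑G.verts ↑G'.verts ∧
    (∀ u ∈ G.verts, ∀ v ∈ G.verts, (s(u, v) ∈ G.edges ↔ s(f u, f v) ∈ G'.edges)) ∧
    ∀ u ∈ G.verts, ∀ v ∈ G.verts, (s(u, v) ∈ M ↔ s(f u, f v) ∈ M')

/-!
An arc `(u, w)` of the `M`-direction comes from an edge `ub` with `wb ∈ M`. If `M'` is a perfect
matching containing `ub`, then `x ↦ M(M'(x))` permutes the `A`-side and sends every vertex to
an out-neighbour or to itself; following the orbit of `u` therefore leads from `w` back to `u`.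
With the connectivity of `G` this makes the `M`-direction strongly connected.

Conversely, splitting each vertex `v` of a strongly connected `D` into `2v ∈ A` and `2v + 1 ∉ A`
gives a bipartite graph whose `M`-direction is `D`. A directed cycle through an arc `(u, v)`,
read as a permutation `σ`, yields the perfect matching `{2w (2σ(w) + 1)}` through the edge
`2u (2v + 1)`. Any `(G', M')` whose `M'`-direction is `D` is recovered from `D` by the same
splitting, which gives uniqueness.
-/

theorem reflTransGen_apply_self_of_injOn {α : Type*} {r : α → α → Prop} {s : Set α}
    (hs : s.Finite) {f : α → α} (hmaps : Set.MapsTo f s s) (hinj : Set.InjOn f s)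
    (hr : ∀ x ∈ s, Relation.ReflTransGen r x (f x)) {x : α} (hx : x ∈ s) :
    Relation.ReflTransGen r (f x) x := by
  have : Finite s := hs.to_subtype
  obtain ⟨n, hn, hper⟩ := (hmaps.restrict_inj.mpr hinj).mem_periodicPts ⟨x, hx⟩
  have hfix : f^[n] x = x := by
    simpa [Function.IsPeriodicPt, Function.IsFixedPt, hmaps.iterate_restrict,
      Subtype.ext_iff] using hper
  have hreach : ∀ m, Relation.ReflTransGen r (f x) (f^[m] (f x)) := by
    intro m
    induction m with
    | zero => exact .refl
    | succ m ih =>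
      rw [Function.iterate_succ_apply']
      exact ih.trans (hr _ (hmaps.iterate m (hmaps hx)))
  obtain ⟨m, rfl⟩ := Nat.exists_eq_add_one_of_ne_zero hn.ne'
  simpa [← Function.iterate_succ_apply, hfix] using hreach m

theorem List.exists_nodup_isChain_cons_of_reflTransGen {α : Type*} {r : α → α → Prop}
    {a b : α} (h : Relation.ReflTransGen r a b) :
    ∃ l, (a :: l).Nodup ∧ (a :: l).IsChain r ∧ (a :: l).getLast (cons_ne_nil _ _) = b := by
  induction h using Relation.ReflTransGen.head_induction_on with
  | refl => exact ⟨[], nodup_singleton _, .singleton _, rfl⟩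
  | @head a c hac _ ih =>
    obtain ⟨l, hnd, hch, hlast⟩ := ih
    by_cases ha : a ∈ c :: l
    · -- `a` recurs: cut out the closed walk by restarting at the later occurrence
      obtain ⟨p, q, hpq⟩ := append_of_mem ha
      rw [hpq] at hnd hch
      refine ⟨q, hnd.of_append_right, hch.right_of_append, ?_⟩
      simpa [hpq] using hlast
    · exact ⟨c :: l, nodup_cons.mpr ⟨ha, hnd⟩, hch.cons_cons hac,
        by rwa [getLast_cons_cons]⟩

theorem List.rel_formPerm_of_isChain {α : Type*} [DecidableEq α] {r : α → α → Prop}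
    {a : α} {l : List α} (hnd : (a :: l).Nodup) (hch : (a :: l).IsChain r)
    (hclose : r ((a :: l).getLast (cons_ne_nil _ _)) a) {x : α} (hx : x ∈ a :: l) :
    r x (formPerm (a :: l) x) := by
  obtain ⟨i, hi, rfl⟩ := getElem_of_mem hx
  by_cases hnext : i + 1 < (a :: l).length
  · rw [formPerm_apply_lt_getElem _ hnd i hnext]
    exact hch.getElem i hnext
  · have hlast : (a :: l)[i] = (a :: l).getLast (cons_ne_nil _ _) := by
      rw [getLast_eq_getElem]
      congr 1
      omega
    rw [hlast, formPerm_apply_getLast]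
    exact hclose

/-- The vertex matched to `v` by `M`; it is `v` itself when `v` is unmatched. -/
noncomputable def matchingPartner (M : Finset (Sym2 ℕ)) (v : ℕ) : ℕ :=
  if h : ∃ z, s(v, z) ∈ M then h.choose else v

abbrev Dgraph.Reachable (D : Dgraph) : ℕ → ℕ → Prop :=
  Relation.ReflTransGen fun a b => (a, b) ∈ D.arcs

namespace UGraph

variable {G : UGraph} {M : Finset (Sym2 ℕ)} {A : Set ℕ}

theorem IsMatching.partner_eq (hM : G.IsMatching M) {v z : ℕ} (h : s(v, z) ∈ M) :
    matchingPartner M v = z := by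
  have hex : ∃ z, s(v, z) ∈ M := ⟨z, h⟩
  rw [matchingPartner, dif_pos hex]
  by_contra hne
  exact hM.2 _ hex.choose_spec _ h (hne ∘ Sym2.congr_right.mp) v (Sym2.mem_mk_left _ _)
    (Sym2.mem_mk_left _ _)

theorem IsPerfectMatching.mk_partner_mem (hM : G.IsPerfectMatching M) {v : ℕ}
    (hv : v ∈ G.verts) : s(v, matchingPartner M v) ∈ M := by
  obtain ⟨e, heM, hve⟩ := hM.2 v hv
  obtain ⟨z, rfl⟩ := Sym2.mem_iff_exists.mp hve
  rwa [hM.1.partner_eq heM]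

theorem IsPerfectMatching.partner_mem_verts (hM : G.IsPerfectMatching M) {v : ℕ}
    (hv : v ∈ G.verts) : matchingPartner M v ∈ G.verts :=
  G.mem_verts _ (hM.1.1 (hM.mk_partner_mem hv)) _ (Sym2.mem_mk_right _ _)

theorem IsPerfectMatching.partner_partner (hM : G.IsPerfectMatching M) {v : ℕ}
    (hv : v ∈ G.verts) : matchingPartner M (matchingPartner M v) = v :=
  hM.1.partner_eq (Sym2.eq_swap ▸ hM.mk_partner_mem hv)

theorem IsPerfectMatching.injOn_partner (hM : G.IsPerfectMatching M) :
    Set.InjOn (matchingPartner M) G.verts := fun u hu v hv huv => by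
  rw [← hM.partner_partner hu, ← hM.partner_partner hv, huv]

theorem IsPerfectMatching.mk_partner_mem_iff (hM : G.IsPerfectMatching M) {a c : ℕ}
    (hc : c ∈ G.verts) :
    s(a, matchingPartner M c) ∈ M ↔ a = c := by
  refine ⟨fun h => ?_, by rintro rfl; exact hM.mk_partner_mem hc⟩
  have h' : s(matchingPartner M c, a) ∈ M := by rwa [Sym2.eq_swap]
  rw [← hM.1.partner_eq h', hM.partner_partner hc]

theorem IsBipartition.mem_iff_notMem (hA : G.IsBipartition A) {v w : ℕ}
    (he : s(v, w) ∈ G.edges) : v ∈ A ↔ w ∉ A := by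
  obtain ⟨a, b, heq, ha, hb⟩ := hA _ he
  rcases Sym2.eq_iff.mp heq with ⟨rfl, rfl⟩ | ⟨rfl, rfl⟩ <;> tauto

theorem IsBipartition.partner_mem_iff (hA : G.IsBipartition A) (hM : G.IsPerfectMatching M)
    {v : ℕ} (hv : v ∈ G.verts) : matchingPartner M v ∈ A ↔ v ∉ A := by
  rw [hA.mem_iff_notMem (Sym2.eq_swap ▸ hM.1.1 (hM.mk_partner_mem hv))]

theorem IsBipartition.mk_mem_iff_of_cross {G' : UGraph} {A' : Set ℕ}
    (hA : G.IsBipartition A) (hA' : G'.IsBipartition A') {S S' : Finset (Sym2 ℕ)}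
    (hS : S ⊆ G.edges) (hS' : S' ⊆ G'.edges) {F : ℕ → ℕ}
    (hside : ∀ x ∈ G.verts, F x ∈ A' ↔ x ∈ A)
    (hcross : ∀ x ∈ G.verts, ∀ y ∈ G.verts, x ∈ A → y ∉ A →
      (s(x, y) ∈ S ↔ s(F x, F y) ∈ S'))
    {x y : ℕ} (hx : x ∈ G.verts) (hy : y ∈ G.verts) :
    s(x, y) ∈ S ↔ s(F x, F y) ∈ S' := by
  have hsame : (x ∈ A ↔ y ∈ A) → (s(x, y) ∉ S ∧ s(F x, F y) ∉ S') := fun hxy =>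
    ⟨fun h => by simpa [hxy] using hA.mem_iff_notMem (hS h),
      fun h => by simpa [hside x hx, hside y hy, hxy] using hA'.mem_iff_notMem (hS' h)⟩
  by_cases hxA : x ∈ A <;> by_cases hyA : y ∈ A
  · exact iff_of_false (hsame (iff_of_true hxA hyA)).1 (hsame (iff_of_true hxA hyA)).2
  · exact hcross x hx y hy hxA hyA
  · rw [Sym2.eq_swap, Sym2.eq_swap (a := F x)]
    exact hcross y hy x hx hyA hxA
  · exact iff_of_false (hsame (iff_of_false hxA hyA)).1 (hsame (iff_of_false hxA hyA)).2

end UGraph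

section MDirection

variable {G : UGraph} {A : Set ℕ} {M : Finset (Sym2 ℕ)}

theorem mem_mDirection_verts {v : ℕ} :
    v ∈ (mDirection G A M).verts ↔ v ∈ G.verts ∧ v ∈ A := by
  simp [mDirection]

theorem mk_mem_mDirection_arcs {u w : ℕ} :
    (u, w) ∈ (mDirection G A M).arcs ↔
      (u ∈ G.verts ∧ u ∈ A) ∧ (w ∈ G.verts ∧ w ∈ A) ∧ u ≠ w ∧
        ∃ b, b ∉ A ∧ s(w, b) ∈ M ∧ s(u, b) ∈ G.edges := by
  simp [mDirection, and_assoc]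

theorem mk_partner_mem_edges_iff (hA : G.IsBipartition A) (hM : G.IsPerfectMatching M)
    {a c : ℕ} (ha : a ∈ G.verts) (haA : a ∈ A) (hc : c ∈ G.verts) (hcA : c ∈ A) :
    s(a, matchingPartner M c) ∈ G.edges ↔ a = c ∨ (a, c) ∈ (mDirection G A M).arcs := by
  constructor
  · intro he
    refine or_iff_not_imp_left.mpr fun hne => mk_mem_mDirection_arcs.mpr
      ⟨⟨ha, haA⟩, ⟨hc, hcA⟩, hne, _, ?_, hM.mk_partner_mem hc, he⟩
    exact (hA.partner_mem_iff hM hc).not.mpr (not_not.mpr hcA)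
  · rintro (rfl | harc)
    · exact hM.1.1 (hM.mk_partner_mem ha)
    · obtain ⟨-, -, -, b, -, hcb, he⟩ := mk_mem_mDirection_arcs.mp harc
      rwa [hM.1.partner_eq hcb]

theorem reachable_mDirection_partner (hA : G.IsBipartition A) (hM : G.IsPerfectMatching M)
    {x b : ℕ} (he : s(x, b) ∈ G.edges) (hx : x ∈ A) :
    (mDirection G A M).Reachable x (matchingPartner M b) := by
  have hxV := G.mem_verts _ he x (Sym2.mem_mk_left _ _)
  have hbV := G.mem_verts _ he b (Sym2.mem_mk_right _ _)
  have hb : b ∉ A := (hA.mem_iff_notMem he).mp hx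
  by_cases hxw : x = matchingPartner M b
  · rw [← hxw]
  · refine .single (mk_mem_mDirection_arcs.mpr ⟨⟨hxV, hx⟩,
      ⟨hM.partner_mem_verts hbV, (hA.partner_mem_iff hM hbV).mpr hb⟩, hxw, b, hb, ?_, he⟩)
    exact Sym2.eq_swap ▸ hM.mk_partner_mem hbV

theorem reachable_mDirection_partner_symm (hA : G.IsBipartition A) (hmc : G.MatchingCovered)
    (hM : G.IsPerfectMatching M) {x b : ℕ} (he : s(x, b) ∈ G.edges) (hx : x ∈ A) :
    (mDirection G A M).Reachable (matchingPartner M b) x := by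
  obtain ⟨M', hM', hxb⟩ := hmc.2 _ he
  have hmaps : Set.MapsTo (matchingPartner M') {v | v ∈ G.verts ∧ v ∈ A}
      {v | v ∈ G.verts ∧ v ∉ A} := fun v hv =>
    ⟨hM'.partner_mem_verts hv.1, fun h => ((hA.partner_mem_iff hM' hv.1).mp h) hv.2⟩
  have hmaps' : Set.MapsTo (matchingPartner M) {v | v ∈ G.verts ∧ v ∉ A}
      {v | v ∈ G.verts ∧ v ∈ A} := fun v hv =>
    ⟨hM.partner_mem_verts hv.1, (hA.partner_mem_iff hM hv.1).mpr hv.2⟩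
  have hswap := reflTransGen_apply_self_of_injOn
    (r := fun a b => (a, b) ∈ (mDirection G A M).arcs)
    (G.verts.finite_toSet.subset fun v hv => hv.1) (hmaps'.comp hmaps)
    ((hM.injOn_partner.mono fun v hv => hv.1).comp (hM'.injOn_partner.mono fun v hv => hv.1)
      hmaps)
    (fun v hv => reachable_mDirection_partner hA hM (hM'.1.1 (hM'.mk_partner_mem hv.1)) hv.2)
    (x := x) ⟨G.mem_verts _ he x (Sym2.mem_mk_left _ _), hx⟩
  rwa [Function.comp_apply, hM'.1.partner_eq hxb] at hswap

theorem mDirection_stronglyConnected (hA : G.IsBipartition A) (hmc : G.MatchingCovered)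
    (hM : G.IsPerfectMatching M) : (mDirection G A M).StronglyConnected := by
  let π : ℕ → ℕ := fun y => if y ∈ A then y else matchingPartner M y
  have hstep : ∀ y z, G.Adj y z → (mDirection G A M).Reachable (π y) (π z) := by
    intro y z he
    by_cases hy : y ∈ A
    · simpa [π, hy, (hA.mem_iff_notMem he).mp hy] using
        reachable_mDirection_partner hA hM he hy
    · have hz : z ∈ A := by simpa [hA.mem_iff_notMem he] using hy
      simpa [π, hy, hz] using
        reachable_mDirection_partner_symm hA hmc hM (Sym2.eq_swap ▸ he) hz
  refine ⟨?_, fun u hu v hv => ?_⟩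
  · obtain ⟨v, hv⟩ := hmc.1.1
    by_cases hvA : v ∈ A
    · exact ⟨v, mem_mDirection_verts.mpr ⟨hv, hvA⟩⟩
    · exact ⟨matchingPartner M v, mem_mDirection_verts.mpr
        ⟨hM.partner_mem_verts hv, (hA.partner_mem_iff hM hv).mpr hvA⟩⟩
  · rw [mem_mDirection_verts] at hu hv
    simpa [π, hu.2, hv.2, Function.onFun] using (hmc.1.2 u hu.1 v hv.1).lift' π hstep

end MDirection

theorem DgraphIso.symm {D D' : Dgraph} (h : DgraphIso D D') : DgraphIso D' D := by
  obtain ⟨f, hbij, harc⟩ := h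
  have hinv := hbij.invOn_invFunOn
  refine ⟨Function.invFunOn f D.verts, hbij.symm hinv.symm, fun u hu v hv => ?_⟩
  have hmaps := (hbij.symm hinv.symm).mapsTo
  rw [harc _ (hmaps hu) _ (hmaps hv), hinv.2 hu, hinv.2 hv]

theorem Dgraph.StronglyConnected.of_dgraphIso {D D' : Dgraph} (hD : D.StronglyConnected)
    (h : DgraphIso D D') : D'.StronglyConnected := by
  obtain ⟨f, hbij, harc⟩ := h
  refine ⟨?_, fun u' hu' v' hv' => ?_⟩
  · obtain ⟨v, hv⟩ := hD.1
    exact ⟨f v, hbij.mapsTo hv⟩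
  · obtain ⟨u, hu, rfl⟩ := hbij.surjOn hu'
    obtain ⟨v, hv, rfl⟩ := hbij.surjOn hv'
    refine (hD.2 u hu v hv).lift f fun a b hab => ?_
    exact (harc a (D.arcs_mem _ hab).1 b (D.arcs_mem _ hab).2).mp hab

theorem mk_two_mul_eq_iff {u v u' v' : ℕ} :
    s(2 * u, 2 * v + 1) = s(2 * u', 2 * v' + 1) ↔ u = u' ∧ v = v' := by
  rw [Sym2.eq_iff]
  omega

namespace Dgraph

variable (D : Dgraph)

/-- The bipartite graph whose `M`-direction is `D`: each vertex `v` splits into the even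
vertex `2v` and the odd vertex `2v + 1`, and each `(u, v)`, an arc of `D` or a loop `u = v`,
becomes the edge `s(2u, 2v + 1)`. -/
noncomputable def splitGraph : UGraph where
  verts := D.verts.image (2 * ·) ∪ D.verts.image (2 * · + 1)
  edges := (D.verts.image (fun v => (v, v)) ∪ D.arcs).image fun a => s(2 * a.1, 2 * a.2 + 1)
  no_loops := by
    intro e he
    obtain ⟨a, -, rfl⟩ := Finset.mem_image.mp he
    rw [Sym2.mk_isDiag_iff]
    omega
  mem_verts := by
    intro e he v hv
    obtain ⟨a, ha, rfl⟩ := Finset.mem_image.mp he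
    have hverts : a.1 ∈ D.verts ∧ a.2 ∈ D.verts := by
      rcases Finset.mem_union.mp ha with ha | ha
      · obtain ⟨w, hw, rfl⟩ := Finset.mem_image.mp ha
        exact ⟨hw, hw⟩
      · exact D.arcs_mem a ha
    rcases Sym2.mem_iff.mp hv with rfl | rfl
    · exact Finset.mem_union_left _ (Finset.mem_image_of_mem _ hverts.1)
    · exact Finset.mem_union_right _ (Finset.mem_image_of_mem _ hverts.2)

noncomputable def permMatching (σ : Equiv.Perm ℕ) : Finset (Sym2 ℕ) :=
  D.verts.image fun w => s(2 * w, 2 * σ w + 1)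

variable {D}

theorem mem_splitGraph_verts {x : ℕ} : x ∈ D.splitGraph.verts ↔ x / 2 ∈ D.verts := by
  simp only [splitGraph, Finset.mem_union, Finset.mem_image]
  constructor
  · rintro (⟨v, hv, rfl⟩ | ⟨v, hv, rfl⟩) <;> simpa [Nat.mul_add_div] using hv
  · intro hx
    obtain ⟨k, rfl | rfl⟩ := Nat.even_or_odd' x
    · exact Or.inl ⟨k, by simpa using hx, rfl⟩
    · exact Or.inr ⟨k, by simpa [Nat.mul_add_div] using hx, rfl⟩

theorem mk_mem_splitGraph_edges {u v : ℕ} :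
    s(2 * u, 2 * v + 1) ∈ D.splitGraph.edges ↔
      (u = v ∧ u ∈ D.verts) ∨ (u, v) ∈ D.arcs := by
  simp only [splitGraph, Finset.mem_image, Finset.mem_union, mk_two_mul_eq_iff]
  constructor
  · rintro ⟨a, ha, rfl, rfl⟩
    rcases ha with ⟨w, hw, rfl⟩ | ha
    · exact Or.inl ⟨rfl, hw⟩
    · exact Or.inr ha
  · rintro (⟨rfl, hu⟩ | huv)
    · exact ⟨(u, u), Or.inl ⟨u, hu, rfl⟩, rfl, rfl⟩
    · exact ⟨(u, v), Or.inr huv, rfl, rfl⟩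

theorem mk_mem_permMatching {σ : Equiv.Perm ℕ} {u v : ℕ} :
    s(2 * u, 2 * v + 1) ∈ D.permMatching σ ↔ σ u = v ∧ u ∈ D.verts := by
  simp only [permMatching, Finset.mem_image, mk_two_mul_eq_iff]
  constructor
  · rintro ⟨w, hw, rfl, rfl⟩
    exact ⟨rfl, hw⟩
  · rintro ⟨rfl, hu⟩
    exact ⟨u, hu, rfl, rfl⟩

theorem splitGraph_isBipartition : D.splitGraph.IsBipartition {n | Even n} := by
  intro e he
  obtain ⟨a, -, rfl⟩ := Finset.mem_image.mp he
  exact ⟨2 * a.1, 2 * a.2 + 1, rfl, even_two_mul _, Nat.not_even_two_mul_add_one _⟩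

theorem permMatching_isPerfectMatching {σ : Equiv.Perm ℕ}
    (hσ : ∀ w, σ w ∈ D.verts ↔ w ∈ D.verts)
    (harc : ∀ w ∈ D.verts, σ w = w ∨ (w, σ w) ∈ D.arcs) :
    D.splitGraph.IsPerfectMatching (D.permMatching σ) := by
  refine ⟨⟨?_, ?_⟩, ?_⟩
  · intro e he
    obtain ⟨w, hw, rfl⟩ := Finset.mem_image.mp he
    rcases harc w hw with h | h
    · exact mk_mem_splitGraph_edges.mpr (Or.inl ⟨h.symm, hw⟩)
    · exact mk_mem_splitGraph_edges.mpr (Or.inr h)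
  · intro e he f hf hef x hxe hxf
    obtain ⟨u, -, rfl⟩ := Finset.mem_image.mp he
    obtain ⟨v, -, rfl⟩ := Finset.mem_image.mp hf
    have huv : u ≠ v := fun h => hef (by rw [h])
    have hσ : σ u ≠ σ v := σ.injective.ne huv
    rw [Sym2.mem_iff] at hxe hxf
    omega
  · intro x hx
    rw [mem_splitGraph_verts] at hx
    obtain ⟨k, rfl | rfl⟩ := Nat.even_or_odd' x
    · refine ⟨s(2 * k, 2 * σ k + 1), ?_, Sym2.mem_mk_left _ _⟩
      exact Finset.mem_image_of_mem _ (by simpa using hx)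
    · refine ⟨s(2 * σ.symm k, 2 * k + 1), ?_, Sym2.mem_mk_right _ _⟩
      refine mk_mem_permMatching.mpr ⟨σ.apply_symm_apply k, ?_⟩
      rw [← hσ, σ.apply_symm_apply]
      simpa [Nat.mul_add_div] using hx

theorem splitGraph_connected (hD : D.StronglyConnected) : D.splitGraph.Connected := by
  let R := Relation.ReflTransGen D.splitGraph.Adj
  have hmatch : ∀ v ∈ D.verts, D.splitGraph.Adj (2 * v) (2 * v + 1) ∧
      D.splitGraph.Adj (2 * v + 1) (2 * v) := fun v hv =>
    have he := mk_mem_splitGraph_edges.mpr (Or.inl ⟨rfl, hv⟩)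
    ⟨he, by rwa [UGraph.Adj, Sym2.eq_swap]⟩
  have hhalf : ∀ x ∈ D.splitGraph.verts, R (2 * (x / 2)) x ∧ R x (2 * (x / 2)) := by
    intro x hx
    rw [mem_splitGraph_verts] at hx
    obtain ⟨k, rfl | rfl⟩ := Nat.even_or_odd' x
    · rw [Nat.mul_div_cancel_left k two_pos]
      exact ⟨.refl, .refl⟩
    · simp only [Nat.mul_add_div two_pos, Nat.div_eq_of_lt one_lt_two, add_zero] at hx ⊢
      exact ⟨.single (hmatch k hx).1, .single (hmatch k hx).2⟩
  have hlift : ∀ u v, D.Reachable u v → R (2 * u) (2 * v) := fun u v huv =>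
    huv.lift' (2 * ·) fun a b hab =>
      .tail (.single (mk_mem_splitGraph_edges.mpr (Or.inr hab)))
        (hmatch b (D.arcs_mem _ hab).2).2
  refine ⟨?_, fun x hx y hy => ?_⟩
  · obtain ⟨v, hv⟩ := hD.1
    exact ⟨2 * v, mem_splitGraph_verts.mpr (by simpa using hv)⟩
  · have hmid := hlift _ _ (hD.2 _ (mem_splitGraph_verts.mp hx) _ (mem_splitGraph_verts.mp hy))
    exact ((hhalf x hx).2.trans hmid).trans (hhalf y hy).1

/-- A directed cycle through the arc `(u, v)`, seen as a permutation of the vertices. -/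
theorem exists_perm_apply_eq_of_mem_arcs (hD : D.StronglyConnected) {u v : ℕ}
    (huv : (u, v) ∈ D.arcs) :
    ∃ σ : Equiv.Perm ℕ, (∀ w, σ w ∈ D.verts ↔ w ∈ D.verts) ∧
      (∀ w ∈ D.verts, σ w = w ∨ (w, σ w) ∈ D.arcs) ∧ σ u = v := by
  obtain ⟨l, hnd, hch, hlast⟩ := List.exists_nodup_isChain_cons_of_reflTransGen
    (hD.2 v (D.arcs_mem _ huv).2 u (D.arcs_mem _ huv).1)
  have hcycle : ∀ w ∈ v :: l, (w, (v :: l).formPerm w) ∈ D.arcs :=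
    fun w hw => List.rel_formPerm_of_isChain hnd hch (by rwa [hlast]) hw
  refine ⟨(v :: l).formPerm, fun w => ?_, fun w _ => ?_, by
    rw [← hlast, List.formPerm_apply_getLast]⟩
  · by_cases hw : w ∈ v :: l
    · exact iff_of_true (D.arcs_mem _ (hcycle _ (List.formPerm_mem_iff_mem.mpr hw))).1
        (D.arcs_mem _ (hcycle w hw)).1
    · rw [List.formPerm_apply_of_notMem hw]
  · by_cases hw : w ∈ v :: l
    · exact Or.inr (hcycle w hw)
    · exact Or.inl (List.formPerm_apply_of_notMem hw)

theorem permMatching_one_isPerfectMatching :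
    D.splitGraph.IsPerfectMatching (D.permMatching 1) :=
  permMatching_isPerfectMatching (fun _ => Iff.rfl) fun _ _ => Or.inl rfl

theorem splitGraph_matchingCovered (hD : D.StronglyConnected) :
    D.splitGraph.MatchingCovered := by
  refine ⟨splitGraph_connected hD, fun e he => ?_⟩
  obtain ⟨⟨u, v⟩, huv, rfl⟩ := Finset.mem_image.mp he
  rcases Finset.mem_union.mp huv with hdiag | harc
  · obtain ⟨w, hw, hwuv⟩ := Finset.mem_image.mp hdiag
    obtain ⟨rfl, rfl⟩ := Prod.mk.inj hwuv
    exact ⟨_, permMatching_one_isPerfectMatching, mk_mem_permMatching.mpr ⟨rfl, hw⟩⟩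
  · obtain ⟨σ, hσ, hσarc, hσuv⟩ := exists_perm_apply_eq_of_mem_arcs hD harc
    exact ⟨_, permMatching_isPerfectMatching hσ hσarc,
      mk_mem_permMatching.mpr ⟨hσuv, (D.arcs_mem _ harc).1⟩⟩

theorem dgraphIso_mDirection_splitGraph :
    DgraphIso D (mDirection D.splitGraph {n | Even n} (D.permMatching 1)) := by
  have hverts : ∀ v ∈ D.verts, 2 * v ∈ D.splitGraph.verts ∧ 2 * v ∈ {n | Even n} :=
    fun v hv => ⟨mem_splitGraph_verts.mpr (by simpa using hv), even_two_mul v⟩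
  refine ⟨(2 * ·), ⟨fun v hv => mem_mDirection_verts.mpr (hverts v hv),
    fun u _ v _ h => by simpa using h, fun x hx => ?_⟩, fun u hu v hv => ?_⟩
  · obtain ⟨hx, k, rfl⟩ := mem_mDirection_verts.mp hx
    refine ⟨k, ?_, by simp only [two_mul]⟩
    simpa [← two_mul] using mem_splitGraph_verts.mp hx
  · simp only [mk_mem_mDirection_arcs]
    constructor
    · intro huv
      refine ⟨hverts u hu, hverts v hv, by simpa using D.no_loops _ huv, 2 * v + 1,
        Nat.not_even_two_mul_add_one v, mk_mem_permMatching.mpr ⟨rfl, hv⟩,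
        mk_mem_splitGraph_edges.mpr (Or.inr huv)⟩
    · rintro ⟨-, -, hne, b, hb, hvb, hub⟩
      obtain ⟨k, rfl⟩ := Nat.not_even_iff_odd.mp hb
      obtain ⟨rfl, -⟩ := mk_mem_permMatching.mp hvb
      exact (mk_mem_splitGraph_edges.mp hub).resolve_left fun h => hne (by rw [h.1]; rfl)

/-- `(G', M')` is recovered from its `M'`-direction: the side-`A'` vertex `a` plays the role
of `2a` and its partner that of `2a + 1`. -/
theorem matchedUGraphIso_splitGraph {G' : UGraph} {A' : Set ℕ} {M' : Finset (Sym2 ℕ)}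
    (hA' : G'.IsBipartition A') (hM' : G'.IsPerfectMatching M')
    (hiso : DgraphIso D (mDirection G' A' M')) :
    MatchedUGraphIso D.splitGraph (D.permMatching 1) G' M' := by
  obtain ⟨g, hbij, harc⟩ := hiso
  have hg : ∀ v ∈ D.verts, g v ∈ G'.verts ∧ g v ∈ A' :=
    fun v hv => mem_mDirection_verts.mp (hbij.mapsTo hv)
  let F : ℕ → ℕ := fun x => if Even x then g (x / 2) else matchingPartner M' (g (x / 2))
  have hF : ∀ x ∈ D.splitGraph.verts, F x ∈ G'.verts ∧ (F x ∈ A' ↔ Even x) := by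
    intro x hx
    obtain ⟨hgV, hgA⟩ := hg _ (mem_splitGraph_verts.mp hx)
    by_cases hxe : Even x
    · simp [F, hxe, hgV, hgA]
    · simp [F, hxe, hM'.partner_mem_verts hgV, hA'.partner_mem_iff hM' hgV, hgA]
  have hcross : ∀ S ⊆ D.splitGraph.edges, ∀ S' ⊆ G'.edges,
      (∀ u ∈ D.verts, ∀ v ∈ D.verts,
        (s(2 * u, 2 * v + 1) ∈ S ↔ s(g u, matchingPartner M' (g v)) ∈ S')) →
      ∀ x ∈ D.splitGraph.verts, ∀ y ∈ D.splitGraph.verts,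
        (s(x, y) ∈ S ↔ s(F x, F y) ∈ S') := by
    intro S hS S' hS' h x hx y hy
    refine splitGraph_isBipartition.mk_mem_iff_of_cross hA' hS hS' (fun x hx => (hF x hx).2)
      (fun x hx y hy hxe hyo => ?_) hx hy
    obtain ⟨u, rfl | rfl⟩ := Nat.even_or_odd' x
    · obtain ⟨v, rfl | rfl⟩ := Nat.even_or_odd' y
      · exact absurd (even_two_mul v) hyo
      · simpa [F, Nat.mul_add_div] using h u (by simpa using mem_splitGraph_verts.mp hx) v
          (by simpa [Nat.mul_add_div] using mem_splitGraph_verts.mp hy)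
    · exact absurd hxe (Nat.not_even_two_mul_add_one u)
  refine ⟨F, ⟨fun x hx => (hF x hx).1, fun x hx y hy hxy => ?_, fun y hy => ?_⟩,
    hcross _ subset_rfl _ subset_rfl fun u hu v hv => ?_,
    hcross _ permMatching_one_isPerfectMatching.1.1 _ hM'.1.1 fun u hu v hv => ?_⟩
  · have hpar : Even x ↔ Even y := by rw [← (hF x hx).2, ← (hF y hy).2, hxy]
    have hx2 := mem_splitGraph_verts.mp hx
    have hy2 := mem_splitGraph_verts.mp hy
    have hhalf : x / 2 = y / 2 := by
      by_cases hxe : Even x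
      · simp only [F, hxe, hpar.mp hxe, if_true] at hxy
        exact hbij.injOn hx2 hy2 hxy
      · simp only [F, hxe, hpar.not.mp hxe, if_false] at hxy
        exact hbij.injOn hx2 hy2 (hM'.injOn_partner (hg _ hx2).1 (hg _ hy2).1 hxy)
    rw [Nat.even_iff, Nat.even_iff] at hpar
    omega
  · by_cases hyA : y ∈ A'
    · obtain ⟨v, hv, rfl⟩ := hbij.surjOn (mem_mDirection_verts.mpr ⟨hy, hyA⟩)
      exact ⟨2 * v, mem_splitGraph_verts.mpr (by simpa using hv), by simp [F]⟩
    · obtain ⟨v, hv, hgv⟩ := hbij.surjOn (mem_mDirection_verts.mpr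
        ⟨hM'.partner_mem_verts hy, (hA'.partner_mem_iff hM' hy).mpr hyA⟩)
      refine ⟨2 * v + 1, mem_splitGraph_verts.mpr (by simpa [Nat.mul_add_div] using hv), ?_⟩
      simp [F, Nat.mul_add_div, hgv, hM'.partner_partner hy]
  · rw [mk_mem_splitGraph_edges, mk_partner_mem_edges_iff hA' hM' (hg u hu).1 (hg u hu).2
      (hg v hv).1 (hg v hv).2, ← harc u hu v hv, hbij.injOn.eq_iff hu hv]
    simp [hu]
  · rw [mk_mem_permMatching, hM'.mk_partner_mem_iff (hg v hv).1, hbij.injOn.eq_iff hu hv]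
    simp [hu]

end Dgraph

/-- A digraph is strongly connected if and only if there is a pair,
unique up to isomorphism, consisting of a bipartite matching covered graph `G` and a
perfect matching `M` of `G` such that `D` is isomorphic to the `M`-direction of `G`. -/
theorem stronglyConnected_iff_mDirection (D : Dgraph) :
    D.StronglyConnected ↔
      ∃ (G : UGraph) (A : Set ℕ) (M : Finset (Sym2 ℕ)),
        G.IsBipartition A ∧ G.MatchingCovered ∧ G.IsPerfectMatching M ∧
        DgraphIso D (mDirection G A M) ∧
        ∀ (G' : UGraph) (A' : Set ℕ) (M' : Finset (Sym2 ℕ)),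
          G'.IsBipartition A' → G'.MatchingCovered → G'.IsPerfectMatching M' →
          DgraphIso D (mDirection G' A' M') → MatchedUGraphIso G M G' M' := by
  constructor
  · intro hD
    exact ⟨D.splitGraph, {n | Even n}, D.permMatching 1, Dgraph.splitGraph_isBipartition,
      Dgraph.splitGraph_matchingCovered hD, Dgraph.permMatching_one_isPerfectMatching,
      Dgraph.dgraphIso_mDirection_splitGraph,
      fun _ _ _ hA' _ hM' hiso => Dgraph.matchedUGraphIso_splitGraph hA' hM' hiso⟩
  · rintro ⟨G, A, M, hA, hmc, hM, hiso, -⟩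
    exact (mDirection_stronglyConnected hA hmc hM).of_dgraphIso hiso.symm
end

section
/- Let G be a matching covered graph, X ⊆ V(G) and M a perfect matching of G. Then there is an M-conformal set X' ⊆ V(G) such that (1) X ⊆ X', (2) |X'| ≤ |X| + mp(∂(X)), and (3) mp(∂(X')) ≤ 2·mp(∂(X)). -/
open scoped Classical

/-- In a matching covered graph, every vertex set `X` can be extended
to an `M`-conformal set `X'` with `|X'| ≤ |X| + mp(∂(X))` and
`mp(∂(X')) ≤ 2·mp(∂(X))`. -/
theorem exists_mConformal_extension (G : UGraph) (M : Finset (Sym2 ℕ)) (X : Finset ℕ)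
    (hG : G.MatchingCovered) (hM : G.IsPerfectMatching M) (hX : X ⊆ G.verts) :
    ∃ X' : Finset ℕ, X' ⊆ G.verts ∧ G.MConformalSet M ↑X' ∧ X ⊆ X' ∧
      X'.card ≤ X.card + G.matchPorosity ↑X ∧
      G.matchPorosity ↑X' ≤ 2 * G.matchPorosity ↑X := by
  classical
  obtain ⟨⟨hMsub, hMdisj⟩, hMcov⟩ := hM
  set X' : Finset ℕ :=
    G.verts.filter (fun v => v ∈ X ∨ ∃ e ∈ M, v ∈ e ∧ ∃ x ∈ X, x ∈ e) with hX'def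
  have hXsub : X ⊆ X' := fun v hv => Finset.mem_filter.mpr ⟨hX hv, Or.inl hv⟩
  have hX'verts : X' ⊆ G.verts := Finset.filter_subset _ _
  have huniq : ∀ e ∈ M, ∀ f ∈ M, ∀ v, v ∈ e → v ∈ f → e = f := by
    intro e he f hf v hv hvf
    by_contra hne
    exact hMdisj e he f hf hne v hv hvf
  have hclosed : ∀ e ∈ M, ∀ v, v ∈ e → v ∈ X' → ∀ w, w ∈ e → w ∈ X' := by
    intro e he v hv hvX' w hw
    have hwverts : w ∈ G.verts := G.mem_verts e (hMsub he) w hw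
    have hv2 : v ∈ X ∨ ∃ e' ∈ M, v ∈ e' ∧ ∃ x ∈ X, x ∈ e' :=
      (Finset.mem_filter.mp hvX').2
    rcases hv2 with hvX | ⟨e', he', hve', x, hx, hxe'⟩
    · exact Finset.mem_filter.mpr ⟨hwverts, Or.inr ⟨e, he, hw, v, hvX, hv⟩⟩
    · have hee : e = e' := huniq e he e' he' v hv hve'
      subst hee
      exact Finset.mem_filter.mpr ⟨hwverts, Or.inr ⟨e, he, hw, x, hx, hxe'⟩⟩
  -- generic porosity bound
  have key : ∀ (S : Set ℕ) (M'' : Finset (Sym2 ℕ)), G.IsPerfectMatching M'' →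
      (G.edgeCut S ∩ M'').card ≤ G.matchPorosity S := by
    intro S M'' h
    rw [UGraph.matchPorosity]
    refine Finset.le_sup (f := fun N => (G.edgeCut S ∩ N).card) ?_
    rw [Finset.mem_filter, Finset.mem_powerset]
    exact ⟨h.1.1, h⟩
  -- conformality
  have hconf : G.MConformalSet M ↑X' := by
    constructor
    · refine ⟨⟨?_, ?_⟩, ?_⟩
      · intro e he
        rw [Finset.mem_filter] at he
        simp only [UGraph.induce, Finset.mem_filter]
        exact ⟨hMsub he.1, he.2⟩
      · intro e he f hf hne v hv
        exact hMdisj e (Finset.mem_of_mem_filter e he) f (Finset.mem_of_mem_filter f hf)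
          hne v hv
      · intro v hv
        simp only [UGraph.induce, Finset.mem_filter] at hv
        obtain ⟨e, he, hve⟩ := hMcov v hv.1
        refine ⟨e, Finset.mem_filter.mpr ⟨he, ?_⟩, hve⟩
        intro w hw
        exact hclosed e he v hve (by simpa using hv.2) w hw
    · refine ⟨⟨?_, ?_⟩, ?_⟩
      · intro e he
        rw [Finset.mem_filter] at he
        simp only [UGraph.induce, Finset.mem_filter]
        refine ⟨hMsub he.1, fun v hv => ?_⟩
        simpa using he.2 v hv
      · intro e he f hf hne v hv
        exact hMdisj e (Finset.mem_of_mem_filter e he) f (Finset.mem_of_mem_filter f hf)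
          hne v hv
      · intro v hv
        simp only [UGraph.induce, Finset.mem_filter] at hv
        obtain ⟨e, he, hve⟩ := hMcov v hv.1
        refine ⟨e, Finset.mem_filter.mpr ⟨he, ?_⟩, hve⟩
        intro w hw hwX'
        have : v ∈ X' := hclosed e he w hw (by simpa using hwX') v hve
        have hv2 := hv.2
        simp only [Set.mem_compl_iff, Finset.mem_coe] at hv2
        exact hv2 this
  -- cardinality bound
  have hcard : X'.card ≤ X.card + G.matchPorosity ↑X := by
    have hmap : ∀ v ∈ X' \ X, ∃ e, e ∈ G.edgeCut ↑X ∩ M ∧ v ∈ e := by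
      intro v hv
      rw [Finset.mem_sdiff] at hv
      have hv2 := (Finset.mem_filter.mp hv.1).2
      rcases hv2 with hvX | ⟨e, he, hve, x, hx, hxe⟩
      · exact absurd hvX hv.2
      · refine ⟨e, Finset.mem_inter.mpr ⟨?_, he⟩, hve⟩
        have hne : x ≠ v := fun h => hv.2 (h ▸ hx)
        have heq : e = s(x, v) := ((Sym2.mem_and_mem_iff hne).mp ⟨hxe, hve⟩)
        rw [UGraph.edgeCut, Finset.mem_filter]
        exact ⟨hMsub he, x, v, heq, by simpa using hx, by simpa using hv.2⟩
    choose! f hf1 hf2 using hmap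
    have hinj : Set.InjOn f ↑(X' \ X) := by
      intro v hv w hw hvw
      simp only [Finset.mem_coe] at hv hw
      have h1 := hf1 v hv
      have h2 := hf1 w hw
      have hv2 := hf2 v hv
      have hw2 := hf2 w hw
      rw [hvw] at hv2
      obtain ⟨hcut, _⟩ := Finset.mem_inter.mp h2
      rw [UGraph.edgeCut, Finset.mem_filter] at hcut
      obtain ⟨_, a, b, heq, ha, hb⟩ := hcut
      rw [heq, Sym2.mem_iff] at hv2 hw2
      have hvX : v ∉ X := (Finset.mem_sdiff.mp hv).2
      have hwX : w ∉ X := (Finset.mem_sdiff.mp hw).2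
      have haX : a ∈ X := by simpa using ha
      rcases hv2 with rfl | rfl
      · exact absurd haX hvX
      · rcases hw2 with rfl | rfl
        · exact absurd haX hwX
        · rfl
    have hle : (X' \ X).card ≤ (G.edgeCut ↑X ∩ M).card :=
      Finset.card_le_card_of_injOn f (fun v hv => (hf1 v hv)) hinj
    have hMperf : G.IsPerfectMatching M := ⟨⟨hMsub, hMdisj⟩, hMcov⟩
    calc X'.card = (X' \ X).card + X.card := (Finset.card_sdiff_add_card_eq_card hXsub).symm
      _ ≤ (G.edgeCut ↑X ∩ M).card + X.card := by omega
      _ ≤ G.matchPorosity ↑X + X.card := by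
          have := key ↑X M hMperf; omega
      _ = X.card + G.matchPorosity ↑X := by omega
  -- porosity bound
  have hpor : G.matchPorosity ↑X' ≤ 2 * G.matchPorosity ↑X := by
    rw [UGraph.matchPorosity]
    apply Finset.sup_le
    intro M' hM'
    rw [Finset.mem_filter] at hM'
    have hM'perf : G.IsPerfectMatching M' := hM'.2
    have hmap2 : ∀ e ∈ G.edgeCut ↑X' ∩ M', ∃ g,
        g ∈ (G.edgeCut ↑X ∩ M') ∪ (G.edgeCut ↑X ∩ M) ∧
        (g = e ∨ ∃ v, v ∈ e ∧ v ∈ g ∧ v ∉ X) := by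
      intro e he
      obtain ⟨hecut, heM'⟩ := Finset.mem_inter.mp he
      by_cases hc : e ∈ G.edgeCut ↑X
      · exact ⟨e, Finset.mem_union_left _ (Finset.mem_inter.mpr ⟨hc, heM'⟩), Or.inl rfl⟩
      · rw [UGraph.edgeCut, Finset.mem_filter] at hecut
        obtain ⟨heE, a, b, heq, ha, hb⟩ := hecut
        have haX' : a ∈ X' := by simpa using ha
        have hbX' : b ∉ X' := by simpa using hb
        have haX : a ∉ X := by
          intro haX
          apply hc
          rw [UGraph.edgeCut, Finset.mem_filter]
          refine ⟨heE, a, b, heq, by simpa using haX, ?_⟩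
          simp only [Finset.mem_coe]
          exact fun hbX => hbX' (hXsub hbX)
        have ha2 := (Finset.mem_filter.mp haX').2
        rcases ha2 with h | ⟨g, hgM, hag, x, hx, hxg⟩
        · exact absurd h haX
        · refine ⟨g, Finset.mem_union_right _ (Finset.mem_inter.mpr ⟨?_, hgM⟩),
            Or.inr ⟨a, by rw [heq]; simp, hag, haX⟩⟩
          have hne : x ≠ a := fun h => haX (h ▸ hx)
          have hgeq : g = s(x, a) := (Sym2.mem_and_mem_iff hne).mp ⟨hxg, hag⟩
          rw [UGraph.edgeCut, Finset.mem_filter]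
          exact ⟨hMsub hgM, x, a, hgeq, by simpa using hx, by simpa using haX⟩
    choose! g hg1 hg2 using hmap2
    have hinj : Set.InjOn g ↑(G.edgeCut ↑X' ∩ M') := by
      intro e1 he1 e2 he2 hgeq
      simp only [Finset.mem_coe] at he1 he2
      have h11 := hg1 e1 he1
      have h12 := hg2 e1 he1
      have h22 := hg2 e2 he2
      have he1M' : e1 ∈ M' := (Finset.mem_inter.mp he1).2
      have he2M' : e2 ∈ M' := (Finset.mem_inter.mp he2).2
      have huniq' : ∀ p ∈ M', ∀ q ∈ M', ∀ v, v ∈ p → v ∈ q → p = q := by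
        intro p hp q hq v hv hvq
        by_contra hne
        exact hM'perf.1.2 p hp q hq hne v hv hvq
      rcases h12 with h12 | ⟨v1, hv1e, hv1g, hv1X⟩
      · rcases h22 with h22 | ⟨v2, hv2e, hv2g, hv2X⟩
        · rw [← h12, ← h22, hgeq]
        · -- g e1 = e1, g e2 contains v2 ∈ e2, and g e1 = g e2
          have : v2 ∈ e1 := by rw [← h12, hgeq]; exact hv2g
          exact huniq' e1 he1M' e2 he2M' v2 this hv2e
      · rcases h22 with h22 | ⟨v2, hv2e, hv2g, hv2X⟩
        · have : v1 ∈ e2 := by rw [← h22, ← hgeq]; exact hv1g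
          exact huniq' e1 he1M' e2 he2M' v1 hv1e this
        · -- both special: v1, v2 both in g e1 = g e2, both ∉ X
          have hgcut : g e1 ∈ G.edgeCut ↑X := by
            rcases Finset.mem_union.mp h11 with h | h
            · exact (Finset.mem_inter.mp h).1
            · exact (Finset.mem_inter.mp h).1
          rw [UGraph.edgeCut, Finset.mem_filter] at hgcut
          obtain ⟨_, a, b, heq, ha, hb⟩ := hgcut
          have hv2g' : v2 ∈ g e1 := by rw [hgeq]; exact hv2g
          rw [heq, Sym2.mem_iff] at hv1g hv2g'
          have haX : a ∈ X := by simpa using ha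
          have hv12 : v1 = v2 := by
            rcases hv1g with rfl | rfl
            · exact absurd haX hv1X
            · rcases hv2g' with rfl | rfl
              · exact absurd haX hv2X
              · rfl
          subst hv12
          exact huniq' e1 he1M' e2 he2M' v1 hv1e hv2e
    have hle : (G.edgeCut ↑X' ∩ M').card ≤
        ((G.edgeCut ↑X ∩ M') ∪ (G.edgeCut ↑X ∩ M)).card :=
      Finset.card_le_card_of_injOn g (fun e he => (hg1 e he)) hinj
    have h1 := key ↑X M' hM'perf
    have h2 := key ↑X M ⟨⟨hMsub, hMdisj⟩, hMcov⟩
    have h3 := Finset.card_union_le (G.edgeCut ↑X ∩ M') (G.edgeCut ↑X ∩ M)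
    omega
  exact ⟨X', hX'verts, hconf, hXsub, hcard, hpor⟩
end
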